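/- arXiv:2410.09321 — 4 statements merged into one kernel-verified Lean document; each statement's English description precedes it below -/
import Mathlib

section
/- Let G=(V,E) be a correlation clustering instance, let β∈(0,1), and let x be the fractional solution built from the pruned graph H: x_{uu}=0 and x_{uv}=1−|N_H(u)∩N_H(v)|/M_{uv} for distinct u,v. Then x satisfies every triangle inequality: for all u,v,w∈V, x_{uv}+x_{uw} ≥ x_{vw}. Together with 0 ≤ x_{uv} ≤ 1 for all u,v and x_{uu}=0, this makes x a feasible solution to the metric LP for correlation clustering. -/
open Finset

attribute [local instance] Classical.propDecidable

noncomputable section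

variable {V : Type*}

/-- The neighborhood of `u` in the graph of `+`edges `E` (contains `u` itself,
since `E` contains all self-loops). -/
def Nbr [Fintype V] (E : V → V → Prop) (u : V) : Finset V :=
  Finset.univ.filter (fun v => E u v)

/-- The degree `d(u) = |N(u)|`. -/
def deg [Fintype V] (E : V → V → Prop) (u : V) : ℕ := (Nbr E u).card

/-- `M_{uv} = max (d(u), d(v))`. -/
def Mdeg [Fintype V] (E : V → V → Prop) (u v : V) : ℕ := max (deg E u) (deg E v)

/-- The pruned edge set `E_H = {uv ∈ E : |N(u) Δ N(v)| ≤ β · M_{uv}}`. -/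
def EH [Fintype V] (β : ℝ) (E : V → V → Prop) (u v : V) : Prop :=
  E u v ∧ ((symmDiff (Nbr E u) (Nbr E v)).card : ℝ) ≤ β * (Mdeg E u v : ℝ)

/-- The neighborhood of `u` in the pruned graph `H`. -/
def NH [Fintype V] (β : ℝ) (E : V → V → Prop) (u : V) : Finset V :=
  Finset.univ.filter (fun v => EH β E u v)

/-- The fractional solution: `x_{uu} = 0` and
`x_{uv} = 1 − |N_H(u) ∩ N_H(v)| / M_{uv}` for `u ≠ v`. -/
def xval [Fintype V] (β : ℝ) (E : V → V → Prop) (u v : V) : ℝ :=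
  if u = v then 0 else 1 - ((NH β E u ∩ NH β E v).card : ℝ) / (Mdeg E u v : ℝ)

lemma natkey (a b c du M1 M2 M3 : ℕ) (h1 : M2 ≤ M1) (h2 : M3 ≤ M1)
    (hab : a + b ≤ du + c) (hb : b ≤ du) (hdu : du ≤ M2) :
    a * (M2 * M3) + b * (M1 * M3) ≤ M1 * (M2 * M3) + c * (M1 * M2) := by
  rcases le_or_gt a c with h | h
  · have t1 : a * (M2 * M3) ≤ c * (M1 * M2) := by
      apply Nat.mul_le_mul h
      calc M2 * M3 ≤ M2 * M1 := Nat.mul_le_mul_left _ h2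
        _ = M1 * M2 := Nat.mul_comm _ _
    have t2 : b * (M1 * M3) ≤ M1 * (M2 * M3) := by
      calc b * (M1 * M3) ≤ M2 * (M1 * M3) := Nat.mul_le_mul_right _ (le_trans hb hdu)
        _ = M1 * (M2 * M3) := by ring
    omega
  · obtain ⟨e, rfl⟩ : ∃ e, a = c + e := ⟨a - c, by omega⟩
    have heb : e + b ≤ du := by omega
    have t1 : c * (M2 * M3) ≤ c * (M1 * M2) := by
      apply Nat.mul_le_mul_left
      calc M2 * M3 ≤ M2 * M1 := Nat.mul_le_mul_left _ h2
        _ = M1 * M2 := Nat.mul_comm _ _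
    have t2 : e * (M2 * M3) + b * (M1 * M3) ≤ M1 * (M2 * M3) := by
      calc e * (M2 * M3) + b * (M1 * M3)
          ≤ e * (M1 * M3) + b * (M1 * M3) := by
            apply Nat.add_le_add_right
            exact Nat.mul_le_mul_left _ (Nat.mul_le_mul_right _ h1)
        _ = (e + b) * (M1 * M3) := by ring
        _ ≤ M2 * (M1 * M3) := Nat.mul_le_mul_right _ (le_trans heb hdu)
        _ = M1 * (M2 * M3) := by ring
    calc (c + e) * (M2 * M3) + b * (M1 * M3)
        = c * (M2 * M3) + (e * (M2 * M3) + b * (M1 * M3)) := by ring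
      _ ≤ c * (M1 * M2) + M1 * (M2 * M3) := Nat.add_le_add t1 t2
      _ = M1 * (M2 * M3) + c * (M1 * M2) := by ring

lemma realkey (a b c du M1 M2 M3 : ℕ) (h1 : M2 ≤ M1) (h2 : M3 ≤ M1)
    (hab : a + b ≤ du + c) (hb : b ≤ du) (hdu : du ≤ M2)
    (hM2 : 1 ≤ M2) (hM3 : 1 ≤ M3) :
    (a : ℝ) / M1 + (b : ℝ) / M2 ≤ 1 + (c : ℝ) / M3 := by
  have pM2 : (0 : ℝ) < M2 := by exact_mod_cast hM2
  have pM1 : (0 : ℝ) < M1 := lt_of_lt_of_le pM2 (by exact_mod_cast h1)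
  have pM3 : (0 : ℝ) < M3 := by exact_mod_cast hM3
  have hr : (a : ℝ) * (M2 * M3) + b * (M1 * M3) ≤ M1 * (M2 * M3) + c * (M1 * M2) := by
    exact_mod_cast natkey a b c du M1 M2 M3 h1 h2 hab hb hdu
  have e1 : (a : ℝ) / M1 + (b : ℝ) / M2
      = ((a : ℝ) * (M2 * M3) + b * (M1 * M3)) / (M1 * (M2 * M3)) := by
    field_simp
  have e2 : 1 + (c : ℝ) / M3
      = ((M1 : ℝ) * (M2 * M3) + c * (M1 * M2)) / (M1 * (M2 * M3)) := by
    field_simp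
  rw [e1, e2]
  gcongr

lemma NH_subset [Fintype V] (β : ℝ) (E : V → V → Prop) (u : V) :
    NH β E u ⊆ Nbr E u := by
  intro v hv
  simp only [NH, Finset.mem_filter] at hv
  simp only [Nbr, Finset.mem_filter]
  exact ⟨hv.1, hv.2.1⟩

lemma deg_pos [Fintype V] (E : V → V → Prop) (hrefl : ∀ u, E u u) (u : V) :
    1 ≤ deg E u := by
  apply Finset.card_pos.mpr
  exact ⟨u, by simp [Nbr, hrefl u]⟩

lemma card_inter_le_Mdeg [Fintype V] (β : ℝ) (E : V → V → Prop) (u v : V) :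
    (NH β E u ∩ NH β E v).card ≤ Mdeg E u v := by
  calc (NH β E u ∩ NH β E v).card ≤ (NH β E u).card :=
        Finset.card_le_card (Finset.inter_subset_left)
    _ ≤ (Nbr E u).card := Finset.card_le_card (NH_subset β E u)
    _ ≤ Mdeg E u v := le_max_left _ _

lemma xval_symm [Fintype V] (β : ℝ) (E : V → V → Prop) (u v : V) :
    xval β E u v = xval β E v u := by
  unfold xval
  by_cases h : u = v
  · simp [h]
  · rw [if_neg h, if_neg (Ne.symm h), Finset.inter_comm, Mdeg, Mdeg, max_comm]

lemma inter_card_key [Fintype V] (β : ℝ) (E : V → V → Prop) (u v w : V) :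
    (NH β E u ∩ NH β E v).card + (NH β E u ∩ NH β E w).card
      ≤ deg E u + (NH β E v ∩ NH β E w).card := by
  have h := Finset.card_union_add_card_inter (NH β E u ∩ NH β E v) (NH β E u ∩ NH β E w)
  have h1 : ((NH β E u ∩ NH β E v) ∪ (NH β E u ∩ NH β E w)).card ≤ deg E u := by
    apply Finset.card_le_card
    intro x hx
    rcases Finset.mem_union.mp hx with hx | hx
    · exact NH_subset β E u (Finset.mem_inter.mp hx).1
    · exact NH_subset β E u (Finset.mem_inter.mp hx).1
  have h2 : ((NH β E u ∩ NH β E v) ∩ (NH β E u ∩ NH β E w)).card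
      ≤ (NH β E v ∩ NH β E w).card := by
    apply Finset.card_le_card
    intro x hx
    simp only [Finset.mem_inter] at hx ⊢
    exact ⟨hx.1.2, hx.2.2⟩
  omega

/-- The fractional solution `x` built from the pruned graph `H`
satisfies every triangle inequality, takes values in `[0,1]`, and vanishes on the
diagonal; hence it is a feasible solution to the metric LP. -/
theorem xval_feasible [Fintype V] (E : V → V → Prop)
    (hsymm : ∀ u v, E u v → E v u) (hrefl : ∀ u, E u u)
    (β : ℝ) (hβ0 : 0 < β) (hβ1 : β < 1) :
    (∀ u v w : V, xval β E v w ≤ xval β E u v + xval β E u w) ∧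
    (∀ u v : V, 0 ≤ xval β E u v ∧ xval β E u v ≤ 1) ∧
    (∀ u : V, xval β E u u = 0) := by
  have hdeg : ∀ u : V, 1 ≤ deg E u := deg_pos E hrefl
  have hMpos : ∀ u v : V, (0 : ℝ) < (Mdeg E u v : ℝ) := by
    intro u v
    have : 1 ≤ Mdeg E u v := le_trans (hdeg u) (le_max_left _ _)
    exact_mod_cast this
  have hbounds : ∀ u v : V, 0 ≤ xval β E u v ∧ xval β E u v ≤ 1 := by
    intro u v
    by_cases h : u = v
    · simp [xval, h]
    · unfold xval
      rw [if_neg h]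
      have hle : ((NH β E u ∩ NH β E v).card : ℝ) ≤ (Mdeg E u v : ℝ) := by
        exact_mod_cast card_inter_le_Mdeg β E u v
      have h01 : ((NH β E u ∩ NH β E v).card : ℝ) / (Mdeg E u v : ℝ) ≤ 1 :=
        div_le_one_of_le₀ hle (le_of_lt (hMpos u v))
      have h00 : (0 : ℝ) ≤ ((NH β E u ∩ NH β E v).card : ℝ) / (Mdeg E u v : ℝ) := by
        positivity
      constructor <;> linarith
  refine ⟨?_, hbounds, fun u => by simp [xval]⟩
  intro u v w
  by_cases hvw : v = w
  · subst hvw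
    have h0 : xval β E v v = 0 := by simp [xval]
    have := (hbounds u v).1
    rw [h0]; linarith
  by_cases huv : u = v
  · subst huv
    have h0 : xval β E u u = 0 := by simp [xval]
    rw [h0]; linarith
  by_cases huw : u = w
  · subst huw
    have h0 : xval β E u u = 0 := by simp [xval]
    rw [xval_symm β E v u, h0]; linarith
  -- main case: u, v, w pairwise distinct
  set a := (NH β E u ∩ NH β E v).card with ha
  set b := (NH β E u ∩ NH β E w).card with hb
  set c := (NH β E v ∩ NH β E w).card with hc
  have hkeyn : a + b ≤ deg E u + c := inter_card_key β E u v w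
  have hbu : b ≤ deg E u :=
    le_trans (Finset.card_le_card Finset.inter_subset_left)
      (Finset.card_le_card (NH_subset β E u))
  have hau : a ≤ deg E u :=
    le_trans (Finset.card_le_card Finset.inter_subset_left)
      (Finset.card_le_card (NH_subset β E u))
  have hM2 : 1 ≤ Mdeg E u w := le_trans (hdeg u) (le_max_left _ _)
  have hM2' : 1 ≤ Mdeg E u v := le_trans (hdeg u) (le_max_left _ _)
  have hM3 : 1 ≤ Mdeg E v w := le_trans (hdeg v) (le_max_left _ _)
  have hkey : (a : ℝ) / (Mdeg E u v : ℝ) + (b : ℝ) / (Mdeg E u w : ℝ)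
      ≤ 1 + (c : ℝ) / (Mdeg E v w : ℝ) := by
    rcases le_total (Mdeg E u w) (Mdeg E u v) with hM | hM
    · apply realkey a b c (deg E u) _ _ _ hM _ hkeyn hbu (le_max_left _ _) hM2 hM3
      exact max_le (le_max_right _ _) (le_trans (le_max_right _ _) hM)
    · have := realkey b a c (deg E u) (Mdeg E u w) (Mdeg E u v) (Mdeg E v w) hM
        (max_le (le_trans (le_max_right _ _) hM) (le_max_right _ _))
        (by omega) hau (le_max_left _ _) hM2' hM3
      linarith
  unfold xval
  rw [if_neg huv, if_neg huw, if_neg hvw]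
  linarith


end
end

section
/- Let G=(V,E) be a correlation clustering instance, β∈(0,1), and let 𝒞 be any clustering of V. For every +edge uv∈E with C(u)=C(v) one has cost_𝒞(u)+cost_𝒞(v) ≥ |N(u) Δ N(v)|; consequently, for every uv∈E∖E_H with C(u)=C(v) (i.e., |N(u) Δ N(v)| > β·M_{uv}), one has cost_𝒞(u)+cost_𝒞(v) ≥ β·M_{uv}. -/
open Finset

attribute [local instance] Classical.propDecidable

noncomputable section

variable {V : Type*}

/-- `cost_𝒞(u)`: the number of pairs incident to `u` in disagreement with respect
to the clustering `C` (given as a labelling function). -/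
def costC [Fintype V] {α : Type*} (E : V → V → Prop) (C : V → α) (u : V) : ℕ :=
  (Finset.univ.filter
    (fun v => (E u v ∧ C u ≠ C v) ∨ (¬ E u v ∧ v ≠ u ∧ C u = C v))).card

/-- The top-`k` norm `cost^k_𝒞` of the disagreement vector of the clustering `C`:
the maximum of `∑_{u ∈ T} cost_𝒞(u)` over subsets `T ⊆ V` of size `k`. -/
def costTopK [Fintype V] {α : Type*} (E : V → V → Prop) (C : V → α) (k : ℕ) : ℕ :=
  (Finset.powersetCard k (Finset.univ : Finset V)).sup (fun T => ∑ u ∈ T, costC E C u)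

/-- `costC E C u` is definitionally the cardinality of this set. -/
def disagreeSet [Fintype V] {α : Type*} (E : V → V → Prop) (C : V → α) (u : V) : Finset V :=
  Finset.univ.filter (fun v => (E u v ∧ C u ≠ C v) ∨ (¬ E u v ∧ v ≠ u ∧ C u = C v))

/-- A neighbour `w` of `u` that is not a neighbour of `v` is cut from `u` if `C w ≠ C u`, and
is otherwise a `−`edge inside the common cluster of `u` and `v`. -/
theorem sdiff_Nbr_subset_disagreeSet [Fintype V] {E : V → V → Prop} (hrefl : ∀ u, E u u)
    {α : Type*} (C : V → α) {u v : V} (hC : C u = C v) :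
    Nbr E u \ Nbr E v ⊆ disagreeSet E C u ∪ disagreeSet E C v := by
  intro w hw
  simp only [Nbr, disagreeSet, mem_sdiff, mem_union, mem_filter, mem_univ, true_and] at hw ⊢
  obtain ⟨huw, hvw⟩ := hw
  by_cases hCw : C u = C w
  · exact Or.inr (Or.inr ⟨hvw, fun hwv => hvw (hwv ▸ hrefl v), hC ▸ hCw⟩)
  · exact Or.inl (Or.inl ⟨huw, hCw⟩)

theorem card_symmDiff_Nbr_le_costC_add [Fintype V] {E : V → V → Prop} (hrefl : ∀ u, E u u)
    {α : Type*} (C : V → α) {u v : V} (hC : C u = C v) :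
    (symmDiff (Nbr E u) (Nbr E v)).card ≤ costC E C u + costC E C v := by
  have hsub : symmDiff (Nbr E u) (Nbr E v) ⊆ disagreeSet E C u ∪ disagreeSet E C v := by
    rw [symmDiff_def, sup_eq_union]
    refine union_subset (sdiff_Nbr_subset_disagreeSet hrefl C hC) ?_
    rw [union_comm]
    exact sdiff_Nbr_subset_disagreeSet hrefl C hC.symm
  calc (symmDiff (Nbr E u) (Nbr E v)).card
      ≤ (disagreeSet E C u ∪ disagreeSet E C v).card := card_le_card hsub
    _ ≤ costC E C u + costC E C v := card_union_le _ _

theorem cost_lower_bound_of_pruned_edge_general [Fintype V] (E : V → V → Prop)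
    (hrefl : ∀ u, E u u) (β : ℝ) {α : Type*} (C : V → α) :
    (∀ u v : V, E u v → C u = C v →
      ((symmDiff (Nbr E u) (Nbr E v)).card : ℝ) ≤ (costC E C u : ℝ) + (costC E C v : ℝ)) ∧
    (∀ u v : V, E u v → ¬ EH β E u v → C u = C v →
      β * (Mdeg E u v : ℝ) ≤ (costC E C u : ℝ) + (costC E C v : ℝ)) := by
  have hbound : ∀ u v : V, C u = C v →
      ((symmDiff (Nbr E u) (Nbr E v)).card : ℝ) ≤ (costC E C u : ℝ) + (costC E C v : ℝ) :=
    fun u v hC => mod_cast card_symmDiff_Nbr_le_costC_add hrefl C hC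
  refine ⟨fun u v _ hC => hbound u v hC, fun u v huv hEH hC => ?_⟩
  have hfar : β * (Mdeg E u v : ℝ) < (symmDiff (Nbr E u) (Nbr E v)).card :=
    lt_of_not_ge fun h => hEH ⟨huv, h⟩
  exact hfar.le.trans (hbound u v hC)

/-- For any clustering `𝒞`: every `+`edge `uv ∈ E` with
`C(u) = C(v)` satisfies `cost_𝒞(u) + cost_𝒞(v) ≥ |N(u) Δ N(v)|`; consequently,
every `uv ∈ E ∖ E_H` with `C(u) = C(v)` satisfies
`cost_𝒞(u) + cost_𝒞(v) ≥ β · M_{uv}`. -/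
theorem cost_lower_bound_of_pruned_edge [Fintype V] (E : V → V → Prop)
    (hsymm : ∀ u v, E u v → E v u) (hrefl : ∀ u, E u u)
    (β : ℝ) (hβ0 : 0 < β) (hβ1 : β < 1)
    {α : Type*} (C : V → α) :
    (∀ u v : V, E u v → C u = C v →
      ((symmDiff (Nbr E u) (Nbr E v)).card : ℝ) ≤ (costC E C u : ℝ) + (costC E C v : ℝ)) ∧
    (∀ u v : V, E u v → ¬ EH β E u v → C u = C v →
      β * (Mdeg E u v : ℝ) ≤ (costC E C u : ℝ) + (costC E C v : ℝ)) :=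
  cost_lower_bound_of_pruned_edge_general E hrefl β C

end
end

section
/- Let G=(V,E) be a correlation clustering instance, β∈(0,1), 𝒞 any clustering, k∈[n], and U⊆V with |U|=k. Then f^+_2 + f^+_3 ≤ (4/β)·cost^k_𝒞, where f^+_2 = Σ_{u∈U} Σ_{uv∈φ^+_2(u)} x_{uv} and f^+_3 = Σ_{u∈U} Σ_{uv∈φ^+_3(u)} x_{uv}. -/
open Finset

attribute [local instance] Classical.propDecidable

noncomputable section

variable {V : Type*}

/-- `φ^+_1(u)`: (other endpoints of) `+`edges incident to `u` that are cut in `𝒞`. -/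
def phi1p [Fintype V] {α : Type*} (E : V → V → Prop) (C : V → α) (u : V) : Finset V :=
  Finset.univ.filter (fun v => E u v ∧ C u ≠ C v)

/-- `φ^+_2(u)`: (other endpoints of) `+`edges of `E ∖ E_H` incident to `u` that are
not cut in `𝒞`. -/
def phi2p [Fintype V] {α : Type*} (β : ℝ) (E : V → V → Prop) (C : V → α) (u : V) :
    Finset V :=
  Finset.univ.filter (fun v => E u v ∧ ¬ EH β E u v ∧ C u = C v)

/-- `φ^+_3(u)`: (other endpoints of) edges of `E_H` incident to `u` that are not cut
in `𝒞` (this includes the self-loop `uu`). -/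
def phi3p [Fintype V] {α : Type*} (β : ℝ) (E : V → V → Prop) (C : V → α) (u : V) :
    Finset V :=
  Finset.univ.filter (fun v => EH β E u v ∧ C u = C v)

/-- `φ^-_1(u)`: (other endpoints of) `−`edges incident to `u` that are not cut in `𝒞`. -/
def phi1m [Fintype V] {α : Type*} (E : V → V → Prop) (C : V → α) (u : V) : Finset V :=
  Finset.univ.filter (fun v => v ≠ u ∧ ¬ E u v ∧ C u = C v)

/-- `φ^-_2(u)`: (other endpoints of) `−`edges incident to `u` that are cut in `𝒞`. -/
def phi2m [Fintype V] {α : Type*} (E : V → V → Prop) (C : V → α) (u : V) : Finset V :=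
  Finset.univ.filter (fun v => v ≠ u ∧ ¬ E u v ∧ C u ≠ C v)

-- ==================== auxiliary development ====================

namespace Stmt7

variable {α : Type*}

abbrev dis (E : V → V → Prop) (C : V → α) (u v : V) : Prop :=
  (E u v ∧ C u ≠ C v) ∨ (¬ E u v ∧ v ≠ u ∧ C u = C v)

lemma costC_eq [Fintype V] (E : V → V → Prop) (C : V → α) (u : V) :
    costC E C u = (Finset.univ.filter (dis E C u)).card := rfl

def SSet [Fintype V] (β : ℝ) (E : V → V → Prop) (u v : V) : Finset V :=
  (Nbr E u ∩ Nbr E v).filter (fun w => ¬ (EH β E u w ∧ EH β E v w))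

def S1set [Fintype V] (β : ℝ) (E : V → V → Prop) (C : V → α) (u v : V) : Finset V :=
  (SSet β E u v).filter (fun w => C w ≠ C u)

def S2a [Fintype V] (β : ℝ) (E : V → V → Prop) (C : V → α) (u v : V) : Finset V :=
  (SSet β E u v).filter (fun w => C w = C u ∧ ¬ EH β E u w)

def S2b [Fintype V] (β : ℝ) (E : V → V → Prop) (C : V → α) (u v : V) : Finset V :=
  (SSet β E u v).filter (fun w => C w = C u ∧ EH β E u w)

def Q3 [Fintype V] (β : ℝ) (E : V → V → Prop) (C : V → α) (u : V) : Finset V :=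
  (phi3p β E C u).erase u

section Basic

variable [Fintype V] {β : ℝ} {E : V → V → Prop} {C : V → α}

lemma mem_Nbr {u v : V} : v ∈ Nbr E u ↔ E u v := by simp [Nbr]

lemma deg_pos (hrefl : ∀ u, E u u) (u : V) : 0 < deg E u :=
  Finset.card_pos.2 ⟨u, mem_Nbr.2 (hrefl u)⟩

lemma degR_pos (hrefl : ∀ u, E u u) (u : V) : (0 : ℝ) < (deg E u : ℝ) := by
  exact_mod_cast deg_pos hrefl u

lemma degR_le_MdegR_left (u v : V) : (deg E u : ℝ) ≤ (Mdeg E u v : ℝ) := by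
  exact_mod_cast le_max_left _ _

lemma degR_le_MdegR_right (u v : V) : (deg E v : ℝ) ≤ (Mdeg E u v : ℝ) := by
  exact_mod_cast le_max_right _ _

lemma MdegR_pos (hrefl : ∀ u, E u u) (u v : V) : (0 : ℝ) < (Mdeg E u v : ℝ) :=
  lt_of_lt_of_le (degR_pos hrefl u) (degR_le_MdegR_left u v)

lemma Mdeg_comm (u v : V) : Mdeg E u v = Mdeg E v u := max_comm _ _

lemma EH_symm (hsymm : ∀ u v, E u v → E v u) {u v : V} (h : EH β E u v) : EH β E v u := by
  obtain ⟨h1, h2⟩ := h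
  refine ⟨hsymm _ _ h1, ?_⟩
  rwa [symmDiff_comm, Mdeg_comm]

lemma EH_refl (hβ0 : 0 ≤ β) (hrefl : ∀ u, E u u) (u : V) : EH β E u u := by
  refine ⟨hrefl u, ?_⟩
  rw [symmDiff_self]
  simp only [Finset.bot_eq_empty, Finset.card_empty, Nat.cast_zero]
  positivity

lemma mem_phi2p {u v : V} : v ∈ phi2p β E C u ↔ E u v ∧ ¬ EH β E u v ∧ C u = C v := by
  simp [phi2p]

lemma mem_phi3p {u v : V} : v ∈ phi3p β E C u ↔ EH β E u v ∧ C u = C v := by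
  simp [phi3p]

lemma mem_Q3 {u v : V} : v ∈ Q3 β E C u ↔ v ≠ u ∧ EH β E u v ∧ C u = C v := by
  simp [Q3, Finset.mem_erase, mem_phi3p, and_assoc]

lemma mem_SSet {u v w : V} :
    w ∈ SSet β E u v ↔ (E u w ∧ E v w) ∧ ¬ (EH β E u w ∧ EH β E v w) := by
  simp [SSet, Finset.mem_filter, Finset.mem_inter, mem_Nbr]

lemma mem_S1set {u v w : V} :
    w ∈ S1set β E C u v ↔ ((E u w ∧ E v w) ∧ ¬ (EH β E u w ∧ EH β E v w)) ∧ C w ≠ C u := by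
  simp [S1set, Finset.mem_filter, mem_SSet]

lemma mem_S2a {u v w : V} :
    w ∈ S2a β E C u v ↔ ((E u w ∧ E v w) ∧ ¬ (EH β E u w ∧ EH β E v w)) ∧
      (C w = C u ∧ ¬ EH β E u w) := by
  simp [S2a, Finset.mem_filter, mem_SSet]

lemma mem_S2b {u v w : V} :
    w ∈ S2b β E C u v ↔ ((E u w ∧ E v w) ∧ ¬ (EH β E u w ∧ EH β E v w)) ∧
      (C w = C u ∧ EH β E u w) := by
  simp [S2b, Finset.mem_filter, mem_SSet]

lemma phi2p_symm (hsymm : ∀ u v, E u v → E v u) {u z : V} :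
    z ∈ phi2p β E C u ↔ u ∈ phi2p β E C z := by
  rw [mem_phi2p, mem_phi2p]
  constructor
  · rintro ⟨h1, h2, h3⟩
    exact ⟨hsymm _ _ h1, fun h => h2 (EH_symm hsymm h), h3.symm⟩
  · rintro ⟨h1, h2, h3⟩
    exact ⟨hsymm _ _ h1, fun h => h2 (EH_symm hsymm h), h3.symm⟩

lemma Q3_symm (hsymm : ∀ u v, E u v → E v u) {u z : V} :
    z ∈ Q3 β E C u ↔ u ∈ Q3 β E C z := by
  rw [mem_Q3, mem_Q3]
  constructor
  · rintro ⟨h1, h2, h3⟩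
    exact ⟨h1.symm, EH_symm hsymm h2, h3.symm⟩
  · rintro ⟨h1, h2, h3⟩
    exact ⟨h1.symm, EH_symm hsymm h2, h3.symm⟩

lemma phi2p_subset_Nbr {u : V} : phi2p β E C u ⊆ Nbr E u := by
  intro v hv
  exact mem_Nbr.2 (mem_phi2p.1 hv).1

lemma Q3_subset_Nbr {u : V} : Q3 β E C u ⊆ Nbr E u := by
  intro v hv
  exact mem_Nbr.2 (mem_Q3.1 hv).2.1.1

lemma card_phi2p_add_card_Q3_le (u : V) :
    (phi2p β E C u).card + (Q3 β E C u).card ≤ deg E u := by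
  have hdisj : Disjoint (phi2p β E C u) (Q3 β E C u) := by
    rw [Finset.disjoint_left]
    intro v hv hv'
    exact (mem_phi2p.1 hv).2.1 (mem_Q3.1 hv').2.1
  rw [← Finset.card_union_of_disjoint hdisj]
  refine Finset.card_le_card ?_
  exact Finset.union_subset phi2p_subset_Nbr Q3_subset_Nbr

lemma card_le_cost_add_cost (u v : V) (T : Finset V)
    (hT : ∀ z ∈ T, dis E C u z ∨ dis E C v z) :
    T.card ≤ costC E C u + costC E C v := by
  have hsub : T ⊆ T.filter (dis E C u) ∪ T.filter (dis E C v) := by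
    intro z hz
    rcases hT z hz with h | h
    · exact Finset.mem_union_left _ (Finset.mem_filter.2 ⟨hz, h⟩)
    · exact Finset.mem_union_right _ (Finset.mem_filter.2 ⟨hz, h⟩)
  calc T.card ≤ (T.filter (dis E C u) ∪ T.filter (dis E C v)).card :=
        Finset.card_le_card hsub
    _ ≤ (T.filter (dis E C u)).card + (T.filter (dis E C v)).card :=
        Finset.card_union_le _ _
    _ ≤ costC E C u + costC E C v := by
        refine Nat.add_le_add ?_ ?_
        · rw [costC_eq]
          exact Finset.card_le_card
            (fun z hz => Finset.mem_filter.2 ⟨Finset.mem_univ _, (Finset.mem_filter.1 hz).2⟩)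
        · rw [costC_eq]
          exact Finset.card_le_card
            (fun z hz => Finset.mem_filter.2 ⟨Finset.mem_univ _, (Finset.mem_filter.1 hz).2⟩)

lemma dis_of_mem_symmDiff (hrefl : ∀ u, E u u) {u v z : V} (hC : C u = C v)
    (hz : z ∈ symmDiff (Nbr E u) (Nbr E v)) :
    dis E C u z ∨ dis E C v z := by
  rw [Finset.mem_symmDiff] at hz
  rcases hz with ⟨hzu, hzv⟩ | ⟨hzv, hzu⟩
  · rw [mem_Nbr] at hzu
    rw [mem_Nbr] at hzv
    by_cases hc : C v = C z
    · right; right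
      refine ⟨hzv, ?_, hc⟩
      intro h; exact hzv (h ▸ hrefl v)
    · left; left
      exact ⟨hzu, fun h => hc (hC ▸ h)⟩
  · rw [mem_Nbr] at hzu
    rw [mem_Nbr] at hzv
    by_cases hc : C u = C z
    · left; right
      refine ⟨hzu, ?_, hc⟩
      intro h; exact hzu (h ▸ hrefl u)
    · right; left
      exact ⟨hzv, fun h => hc (hC ▸ h)⟩

lemma symmDiff_card_le (hrefl : ∀ u, E u u) {u v : V} (hC : C u = C v) :
    (symmDiff (Nbr E u) (Nbr E v)).card ≤ costC E C u + costC E C v :=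
  card_le_cost_add_cost u v _ (fun _ hz => dis_of_mem_symmDiff hrefl hC hz)

lemma symmDiff_add_S1_card_le (hrefl : ∀ u, E u u) {u v : V} (hC : C u = C v) :
    (symmDiff (Nbr E u) (Nbr E v)).card + (S1set β E C u v).card
      ≤ costC E C u + costC E C v := by
  have hdisj : Disjoint (symmDiff (Nbr E u) (Nbr E v)) (S1set β E C u v) := by
    rw [Finset.disjoint_left]
    intro w hw hw1
    have h1 := (mem_S1set.1 hw1).1.1
    rw [Finset.mem_symmDiff] at hw
    rcases hw with ⟨_, h⟩ | ⟨_, h⟩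
    · exact h (mem_Nbr.2 h1.2)
    · exact h (mem_Nbr.2 h1.1)
  rw [← Finset.card_union_of_disjoint hdisj]
  refine card_le_cost_add_cost u v _ ?_
  intro z hz
  rcases Finset.mem_union.1 hz with hz | hz
  · exact dis_of_mem_symmDiff hrefl hC hz
  · obtain ⟨⟨hE, _⟩, hc⟩ := mem_S1set.1 hz
    left; left
    exact ⟨hE.1, fun h => hc (h.symm)⟩

lemma Mdeg_le_decomp (u v : V) :
    Mdeg E u v ≤ (NH β E u ∩ NH β E v).card
      + (symmDiff (Nbr E u) (Nbr E v)).card + (SSet β E u v).card := by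
  have hsubu : Nbr E u ⊆ ((NH β E u ∩ NH β E v) ∪ symmDiff (Nbr E u) (Nbr E v)) ∪ SSet β E u v := by
    intro w hw
    by_cases h2 : w ∈ Nbr E v
    · by_cases h3 : EH β E u w ∧ EH β E v w
      · refine Finset.mem_union_left _ (Finset.mem_union_left _ ?_)
        refine Finset.mem_inter.2 ⟨?_, ?_⟩
        · simp [NH, h3.1]
        · simp [NH, h3.2]
      · exact Finset.mem_union_right _
          (Finset.mem_filter.2 ⟨Finset.mem_inter.2 ⟨hw, h2⟩, h3⟩)
    · refine Finset.mem_union_left _ (Finset.mem_union_right _ ?_)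
      exact Finset.mem_symmDiff.2 (Or.inl ⟨hw, h2⟩)
  have hsubv : Nbr E v ⊆ ((NH β E u ∩ NH β E v) ∪ symmDiff (Nbr E u) (Nbr E v)) ∪ SSet β E u v := by
    intro w hw
    by_cases h2 : w ∈ Nbr E u
    · exact hsubu h2
    · refine Finset.mem_union_left _ (Finset.mem_union_right _ ?_)
      exact Finset.mem_symmDiff.2 (Or.inr ⟨hw, h2⟩)
  have hcard : ∀ {s : Finset V},
      s ⊆ ((NH β E u ∩ NH β E v) ∪ symmDiff (Nbr E u) (Nbr E v)) ∪ SSet β E u v →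
      s.card ≤ (NH β E u ∩ NH β E v).card + (symmDiff (Nbr E u) (Nbr E v)).card
        + (SSet β E u v).card := by
    intro s hs
    calc s.card ≤ _ := Finset.card_le_card hs
      _ ≤ ((NH β E u ∩ NH β E v) ∪ symmDiff (Nbr E u) (Nbr E v)).card + (SSet β E u v).card :=
          Finset.card_union_le _ _
      _ ≤ _ := Nat.add_le_add_right (Finset.card_union_le _ _) _
  exact max_le (hcard hsubu) (hcard hsubv)

lemma SSet_card_le (u v : V) :
    (SSet β E u v).card
      ≤ (S1set β E C u v).card + (S2a β E C u v).card + (S2b β E C u v).card := by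
  have hsub : SSet β E u v ⊆ (S1set β E C u v ∪ S2a β E C u v) ∪ S2b β E C u v := by
    intro w hw
    by_cases h1 : C w = C u
    · by_cases h2 : EH β E u w
      · exact Finset.mem_union_right _ (Finset.mem_filter.2 ⟨hw, h1, h2⟩)
      · exact Finset.mem_union_left _
          (Finset.mem_union_right _ (Finset.mem_filter.2 ⟨hw, h1, h2⟩))
    · exact Finset.mem_union_left _
        (Finset.mem_union_left _ (Finset.mem_filter.2 ⟨hw, h1⟩))
  calc (SSet β E u v).card ≤ _ := Finset.card_le_card hsub
    _ ≤ (S1set β E C u v ∪ S2a β E C u v).card + (S2b β E C u v).card :=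
        Finset.card_union_le _ _
    _ ≤ _ := Nat.add_le_add_right (Finset.card_union_le _ _) _

lemma beta_le_of_not_EH (hrefl : ∀ u, E u u) (hβ0 : 0 < β) {u w : V}
    (hE : E u w) (hnEH : ¬ EH β E u w) (hC : C u = C w) :
    β ≤ (costC E C u : ℝ) / (deg E u : ℝ) + (costC E C w : ℝ) / (deg E w : ℝ) := by
  have hlt : β * (Mdeg E u w : ℝ) < ((symmDiff (Nbr E u) (Nbr E w)).card : ℝ) := by
    by_contra h
    push_neg at h
    exact hnEH ⟨hE, h⟩
  have hsd : ((symmDiff (Nbr E u) (Nbr E w)).card : ℝ)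
      ≤ (costC E C u : ℝ) + (costC E C w : ℝ) := by
    exact_mod_cast symmDiff_card_le hrefl hC
  have hM : (0 : ℝ) < (Mdeg E u w : ℝ) := MdegR_pos hrefl u w
  have h1 : β ≤ ((costC E C u : ℝ) + (costC E C w : ℝ)) / (Mdeg E u w : ℝ) := by
    rw [le_div_iff₀ hM]
    nlinarith
  calc β ≤ _ := h1
    _ = (costC E C u : ℝ) / (Mdeg E u w : ℝ) + (costC E C w : ℝ) / (Mdeg E u w : ℝ) :=
        add_div _ _ _
    _ ≤ (costC E C u : ℝ) / (deg E u : ℝ) + (costC E C w : ℝ) / (deg E w : ℝ) := by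
        have d1 : (costC E C u : ℝ) / (Mdeg E u w : ℝ) ≤ (costC E C u : ℝ) / (deg E u : ℝ) :=
          div_le_div_of_nonneg_left (Nat.cast_nonneg _) (degR_pos hrefl u)
            (degR_le_MdegR_left u w)
        have d2 : (costC E C w : ℝ) / (Mdeg E u w : ℝ) ≤ (costC E C w : ℝ) / (deg E w : ℝ) :=
          div_le_div_of_nonneg_left (Nat.cast_nonneg _) (degR_pos hrefl w)
            (degR_le_MdegR_right u w)
        linarith

lemma S2a_subset_phi2p (u v : V) : S2a β E C u v ⊆ phi2p β E C u := by
  intro w hw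
  obtain ⟨⟨hE, _⟩, hc, hn⟩ := mem_S2a.1 hw
  exact mem_phi2p.2 ⟨hE.1, hn, hc.symm⟩

lemma S2b_subset_phi2p_right {u v w : V} (hC : C u = C v) (hw : w ∈ S2b β E C u v) :
    w ∈ phi2p β E C v := by
  obtain ⟨⟨hE, hcond⟩, hc, hEHu⟩ := mem_S2b.1 hw
  refine mem_phi2p.2 ⟨hE.2, ?_, (hC ▸ hc).symm⟩
  intro hEHv
  exact hcond ⟨hEHu, hEHv⟩

lemma S2b_subset_Q3 (hsymm : ∀ u v, E u v → E v u) (hrefl : ∀ u, E u u)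
    (hβ0 : 0 ≤ β) {u v : V} (hEH : EH β E u v) :
    S2b β E C u v ⊆ Q3 β E C u := by
  intro w hw
  obtain ⟨⟨hE, hcond⟩, hc, hEHu⟩ := mem_S2b.1 hw
  refine mem_Q3.2 ⟨?_, hEHu, hc.symm⟩
  intro hwu
  subst hwu
  exact hcond ⟨EH_refl hβ0 hrefl w, EH_symm hsymm hEH⟩

lemma S2a_subset_Nbr_right (u v : V) : S2a β E C u v ⊆ Nbr E v := by
  intro w hw
  exact mem_Nbr.2 (mem_S2a.1 hw).1.1.2

lemma S2b_subset_Nbr_right (u v : V) : S2b β E C u v ⊆ Nbr E v := by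
  intro w hw
  exact mem_Nbr.2 (mem_S2b.1 hw).1.1.2

lemma S2a_subset_Nbr_left (u v : V) : S2a β E C u v ⊆ Nbr E u := by
  intro w hw
  exact mem_Nbr.2 (mem_S2a.1 hw).1.1.1

lemma S2b_subset_Nbr_left (u v : V) : S2b β E C u v ⊆ Nbr E u := by
  intro w hw
  exact mem_Nbr.2 (mem_S2b.1 hw).1.1.1

/-- The per-pair bound for `φ₂⁺` pairs. -/
lemma pair2_bound (hrefl : ∀ u, E u u) (hβ0 : 0 < β) {u v : V}
    (hv : v ∈ phi2p β E C u) :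
    β * xval β E u v ≤ (costC E C u : ℝ) * (1 / (Mdeg E u v : ℝ))
      + (costC E C v : ℝ) * (1 / (Mdeg E u v : ℝ)) := by
  obtain ⟨hE, hnEH, hC⟩ := mem_phi2p.1 hv
  have hne : u ≠ v := by
    intro h
    exact hnEH (h ▸ EH_refl hβ0.le hrefl u)
  have hM : (0 : ℝ) < (Mdeg E u v : ℝ) := MdegR_pos hrefl u v
  have hx : xval β E u v ≤ 1 := by
    rw [xval, if_neg hne]
    have : (0 : ℝ) ≤ ((NH β E u ∩ NH β E v).card : ℝ) / (Mdeg E u v : ℝ) := by positivity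
    linarith
  have hlt : β * (Mdeg E u v : ℝ) < ((symmDiff (Nbr E u) (Nbr E v)).card : ℝ) := by
    by_contra h
    push_neg at h
    exact hnEH ⟨hE, h⟩
  have hsd : ((symmDiff (Nbr E u) (Nbr E v)).card : ℝ)
      ≤ (costC E C u : ℝ) + (costC E C v : ℝ) := by
    exact_mod_cast symmDiff_card_le hrefl hC
  have h1 : β * xval β E u v ≤ β := by
    nlinarith
  have h2 : β ≤ ((costC E C u : ℝ) + (costC E C v : ℝ)) / (Mdeg E u v : ℝ) := by
    rw [le_div_iff₀ hM]
    nlinarith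
  calc β * xval β E u v ≤ β := h1
    _ ≤ ((costC E C u : ℝ) + (costC E C v : ℝ)) / (Mdeg E u v : ℝ) := h2
    _ = (costC E C u : ℝ) * (1 / (Mdeg E u v : ℝ))
        + (costC E C v : ℝ) * (1 / (Mdeg E u v : ℝ)) := by ring

/-- The per-pair bound for `φ₃⁺` pairs. -/
lemma pair3_bound (hsymm : ∀ u v, E u v → E v u) (hrefl : ∀ u, E u u)
    (hβ0 : 0 < β) {u v : V} (hv : v ∈ Q3 β E C u) :
    β * xval β E u v ≤
      (costC E C u : ℝ) * ((β + (S2a β E C u v).card / (deg E u : ℝ)) / (Mdeg E u v : ℝ))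
      + (costC E C v : ℝ) * ((β + (S2b β E C u v).card / (deg E v : ℝ)) / (Mdeg E u v : ℝ))
      + ((∑ w ∈ S2a β E C u v, (costC E C w : ℝ) * (1 / ((deg E w : ℝ) * (Mdeg E u v : ℝ))))
        + ∑ w ∈ S2b β E C u v, (costC E C w : ℝ) * (1 / ((deg E w : ℝ) * (Mdeg E u v : ℝ)))) := by
  obtain ⟨hne, hEH, hC⟩ := mem_Q3.1 hv
  have hM : (0 : ℝ) < (Mdeg E u v : ℝ) := MdegR_pos hrefl u v
  have hdu : (0 : ℝ) < (deg E u : ℝ) := degR_pos hrefl u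
  have hdv : (0 : ℝ) < (deg E v : ℝ) := degR_pos hrefl v
  have hMle0 : (Mdeg E u v : ℝ) ≤ ((NH β E u ∩ NH β E v).card : ℝ)
      + ((symmDiff (Nbr E u) (Nbr E v)).card : ℝ) + ((S1set β E C u v).card : ℝ)
      + ((S2a β E C u v).card : ℝ) + ((S2b β E C u v).card : ℝ) := by
    have h1 : (Mdeg E u v : ℝ) ≤ ((NH β E u ∩ NH β E v).card : ℝ)
        + ((symmDiff (Nbr E u) (Nbr E v)).card : ℝ) + ((SSet β E u v).card : ℝ) := by
      exact_mod_cast Mdeg_le_decomp (β := β) u v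
    have h2 : ((SSet β E u v).card : ℝ) ≤ ((S1set β E C u v).card : ℝ)
        + ((S2a β E C u v).card : ℝ) + ((S2b β E C u v).card : ℝ) := by
      exact_mod_cast SSet_card_le (C := C) u v
    linarith
  have hsd10 : ((symmDiff (Nbr E u) (Nbr E v)).card : ℝ) + ((S1set β E C u v).card : ℝ)
      ≤ (costC E C u : ℝ) + (costC E C v : ℝ) := by
    exact_mod_cast symmDiff_add_S1_card_le hrefl hC
  set A : ℝ := ((NH β E u ∩ NH β E v).card : ℝ) with hA
  set sd : ℝ := ((symmDiff (Nbr E u) (Nbr E v)).card : ℝ) with hsd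
  set s1 : ℝ := ((S1set β E C u v).card : ℝ) with hs1
  set s2a : ℝ := ((S2a β E C u v).card : ℝ) with hs2a
  set s2b : ℝ := ((S2b β E C u v).card : ℝ) with hs2b
  set cu : ℝ := (costC E C u : ℝ) with hcu
  set cv : ℝ := (costC E C v : ℝ) with hcv
  have hMle : (Mdeg E u v : ℝ) ≤ A + sd + s1 + s2a + s2b := hMle0
  have hsd1 : sd + s1 ≤ cu + cv := hsd10
  have h2a : s2a * β ≤ s2a * (cu / (deg E u : ℝ))
      + ∑ w ∈ S2a β E C u v, (costC E C w : ℝ) / (deg E w : ℝ) := by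
    have hle : ∑ w ∈ S2a β E C u v, β
        ≤ ∑ w ∈ S2a β E C u v, (cu / (deg E u : ℝ) + (costC E C w : ℝ) / (deg E w : ℝ)) := by
      refine Finset.sum_le_sum ?_
      intro w hw
      obtain ⟨⟨hE, _⟩, hc, hn⟩ := mem_S2a.1 hw
      exact beta_le_of_not_EH hrefl hβ0 hE.1 hn hc.symm
    rw [Finset.sum_const, Finset.sum_add_distrib, Finset.sum_const] at hle
    simpa [nsmul_eq_mul, mul_comm] using hle
  have h2b : s2b * β ≤ s2b * (cv / (deg E v : ℝ))
      + ∑ w ∈ S2b β E C u v, (costC E C w : ℝ) / (deg E w : ℝ) := by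
    have hle : ∑ w ∈ S2b β E C u v, β
        ≤ ∑ w ∈ S2b β E C u v, (cv / (deg E v : ℝ) + (costC E C w : ℝ) / (deg E w : ℝ)) := by
      refine Finset.sum_le_sum ?_
      intro w hw
      obtain ⟨⟨hE, hcond⟩, hc, hEHu⟩ := mem_S2b.1 hw
      refine beta_le_of_not_EH hrefl hβ0 hE.2 ?_ (hC ▸ hc).symm
      intro hEHv
      exact hcond ⟨hEHu, hEHv⟩
    rw [Finset.sum_const, Finset.sum_add_distrib, Finset.sum_const] at hle
    simpa [nsmul_eq_mul, mul_comm] using hle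
  have hnum : β * ((Mdeg E u v : ℝ) - A)
      ≤ cu * (β + s2a / (deg E u : ℝ)) + cv * (β + s2b / (deg E v : ℝ))
        + ((∑ w ∈ S2a β E C u v, (costC E C w : ℝ) / (deg E w : ℝ))
          + ∑ w ∈ S2b β E C u v, (costC E C w : ℝ) / (deg E w : ℝ)) := by
    have e1 : β * ((Mdeg E u v : ℝ) - A) ≤ β * ((sd + s1) + s2a + s2b) :=
      mul_le_mul_of_nonneg_left (by linarith) hβ0.le
    have e2 : β * (sd + s1) ≤ β * (cu + cv) :=
      mul_le_mul_of_nonneg_left hsd1 hβ0.le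
    have hs2acu : s2a * (cu / (deg E u : ℝ)) = cu * (s2a / (deg E u : ℝ)) := by ring
    have hs2bcv : s2b * (cv / (deg E v : ℝ)) = cv * (s2b / (deg E v : ℝ)) := by ring
    nlinarith [h2a, h2b]
  -- from numerator to the bound
  have hxeq : xval β E u v = ((Mdeg E u v : ℝ) - A) / (Mdeg E u v : ℝ) := by
    rw [xval, if_neg hne.symm, sub_div, div_self hM.ne']
  have hdivs : ∀ w : V, (costC E C w : ℝ) / (deg E w : ℝ) / (Mdeg E u v : ℝ)
      = (costC E C w : ℝ) * (1 / ((deg E w : ℝ) * (Mdeg E u v : ℝ))) := by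
    intro w
    rw [div_div, mul_one_div]
  calc β * xval β E u v = (β * ((Mdeg E u v : ℝ) - A)) / (Mdeg E u v : ℝ) := by
        rw [hxeq]; ring
    _ ≤ (cu * (β + s2a / (deg E u : ℝ)) + cv * (β + s2b / (deg E v : ℝ))
        + ((∑ w ∈ S2a β E C u v, (costC E C w : ℝ) / (deg E w : ℝ))
          + ∑ w ∈ S2b β E C u v, (costC E C w : ℝ) / (deg E w : ℝ))) / (Mdeg E u v : ℝ) := by
        gcongr
    _ = cu * ((β + s2a / (deg E u : ℝ)) / (Mdeg E u v : ℝ))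
        + cv * ((β + s2b / (deg E v : ℝ)) / (Mdeg E u v : ℝ))
        + ((∑ w ∈ S2a β E C u v, (costC E C w : ℝ) / (deg E w : ℝ) / (Mdeg E u v : ℝ))
          + ∑ w ∈ S2b β E C u v, (costC E C w : ℝ) / (deg E w : ℝ) / (Mdeg E u v : ℝ)) := by
        rw [← Finset.sum_div, ← Finset.sum_div]
        ring
    _ = _ := by
        simp only [hdivs]


end Basic

/-- u-role weight. -/
def Aw [Fintype V] (β : ℝ) (E : V → V → Prop) (C : V → α) (u : V) : ℝ :=
  (∑ v ∈ phi2p β E C u, 1 / (Mdeg E u v : ℝ))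
  + ∑ v ∈ Q3 β E C u, (β + ((S2a β E C u v).card : ℝ) / (deg E u : ℝ)) / (Mdeg E u v : ℝ)

/-- v-role weight. -/
def Bw [Fintype V] (β : ℝ) (E : V → V → Prop) (C : V → α) (U : Finset V) (z : V) : ℝ :=
  ∑ u ∈ U, ((if z ∈ phi2p β E C u then 1 / (Mdeg E u z : ℝ) else 0)
    + (if z ∈ Q3 β E C u then
        (β + ((S2b β E C u z).card : ℝ) / (deg E z : ℝ)) / (Mdeg E u z : ℝ) else 0))

/-- w-role weight. -/
def Ww [Fintype V] (β : ℝ) (E : V → V → Prop) (C : V → α) (U : Finset V) (z : V) : ℝ :=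
  ∑ u ∈ U, ∑ v ∈ Q3 β E C u,
    ((if z ∈ S2a β E C u v then 1 / ((deg E z : ℝ) * (Mdeg E u v : ℝ)) else 0)
      + (if z ∈ S2b β E C u v then 1 / ((deg E z : ℝ) * (Mdeg E u v : ℝ)) else 0))

/-- total weight. -/
def rho [Fintype V] (β : ℝ) (E : V → V → Prop) (C : V → α) (U : Finset V) (z : V) : ℝ :=
  (if z ∈ U then Aw β E C z else 0) + Bw β E C U z + Ww β E C U z

lemma arith_cap {β p q d : ℝ} (hβ0 : 0 < β) (hβ1 : β ≤ 1) (hp : 0 ≤ p) (hq : 0 ≤ q)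
    (hd : 1 ≤ d) (hpq : p + q ≤ d) :
    p * (1 / d) + q * ((β + p / d) / d) ≤ 3 / 2 := by
  have hd0 : (0:ℝ) < d := lt_of_lt_of_le one_pos hd
  have key : p * (1/d) + q * ((β + p/d)/d) = (p*d + β*q*d + q*p) / (d*d) := by
    field_simp
    ring
  rw [key, div_le_iff₀ (by positivity)]
  nlinarith [mul_nonneg (mul_nonneg (sub_nonneg.2 hβ1) hq) hd0.le,
    mul_nonneg (by linarith : (0:ℝ) ≤ d - p - q) hd0.le, sq_nonneg (p - q),
    mul_nonneg (by linarith : (0:ℝ) ≤ d - p - q) (by linarith : (0:ℝ) ≤ d + p + q),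
    sq_nonneg p, sq_nonneg q]

lemma arith_total {β p q d : ℝ} (hβ0 : 0 < β) (hβ1 : β ≤ 1) (hp : 0 ≤ p) (hq : 0 ≤ q)
    (hd : 1 ≤ d) (hpq : p + q ≤ d) :
    (p * (1 / d) + q * ((β + p / d) / d))
      + (p * (1 / d) + q * ((β + 1) / d))
      + (1 / d) * (p + q) ≤ 4 := by
  have hd0 : (0:ℝ) < d := lt_of_lt_of_le one_pos hd
  have key : (p * (1/d) + q * ((β + p/d)/d)) + (p * (1/d) + q * ((β+1)/d)) + (1/d)*(p+q)
      = (3*(p*d) + 2*(β*(q*d)) + 2*(q*d) + q*p) / (d*d) := by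
    field_simp
    ring
  rw [key, div_le_iff₀ (by positivity)]
  nlinarith [mul_nonneg (by linarith : (0:ℝ) ≤ d - p - q) hd0.le,
    mul_nonneg hp (by linarith : (0:ℝ) ≤ d - q),
    mul_nonneg (mul_nonneg (by linarith : (0:ℝ) ≤ 2 - 2*β) hq) hd0.le]

section Caps

variable [Fintype V] {β : ℝ} {E : V → V → Prop} {C : V → α}

lemma Aw_nonneg (hrefl : ∀ u, E u u) (hβ0 : 0 < β) (u : V) : 0 ≤ Aw β E C u := by
  refine add_nonneg (Finset.sum_nonneg ?_) (Finset.sum_nonneg ?_) <;> intro v _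
  · positivity
  · refine div_nonneg (add_nonneg hβ0.le (by positivity)) (Nat.cast_nonneg _)

lemma Bw_nonneg (hβ0 : 0 < β) (U : Finset V) (z : V) : 0 ≤ Bw β E C U z := by
  refine Finset.sum_nonneg ?_
  intro u _
  refine add_nonneg ?_ ?_
  · split
    · positivity
    · exact le_refl 0
  · split
    · exact div_nonneg (add_nonneg hβ0.le (by positivity)) (Nat.cast_nonneg _)
    · exact le_refl 0

lemma Ww_nonneg (U : Finset V) (z : V) : 0 ≤ Ww β E C U z := by
  refine Finset.sum_nonneg fun u _ => Finset.sum_nonneg fun v _ => add_nonneg ?_ ?_ <;>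
    · split
      · positivity
      · exact le_refl 0

lemma rho_nonneg (hrefl : ∀ u, E u u) (hβ0 : 0 < β) (U : Finset V) (z : V) :
    0 ≤ rho β E C U z := by
  refine add_nonneg (add_nonneg ?_ (Bw_nonneg hβ0 U z)) (Ww_nonneg U z)
  split
  · exact Aw_nonneg hrefl hβ0 z
  · exact le_refl 0

lemma cast_card_le_deg (u : V) :
    ((phi2p β E C u).card : ℝ) + ((Q3 β E C u).card : ℝ) ≤ (deg E u : ℝ) := by
  exact_mod_cast card_phi2p_add_card_Q3_le u

lemma Aw_le_poly (hrefl : ∀ u, E u u) (hβ0 : 0 < β) (u : V) :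
    Aw β E C u ≤ ((phi2p β E C u).card : ℝ) * (1 / (deg E u : ℝ))
      + ((Q3 β E C u).card : ℝ)
        * ((β + ((phi2p β E C u).card : ℝ) / (deg E u : ℝ)) / (deg E u : ℝ)) := by
  have hdu := degR_pos hrefl u
  refine add_le_add ?_ ?_
  · calc ∑ v ∈ phi2p β E C u, 1 / (Mdeg E u v : ℝ)
        ≤ ∑ _v ∈ phi2p β E C u, 1 / (deg E u : ℝ) := by
          refine Finset.sum_le_sum fun v _ => ?_
          exact one_div_le_one_div_of_le hdu (degR_le_MdegR_left u v)
      _ = _ := by rw [Finset.sum_const, nsmul_eq_mul]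
  · calc ∑ v ∈ Q3 β E C u, (β + ((S2a β E C u v).card : ℝ) / (deg E u : ℝ)) / (Mdeg E u v : ℝ)
        ≤ ∑ _v ∈ Q3 β E C u,
            (β + ((phi2p β E C u).card : ℝ) / (deg E u : ℝ)) / (deg E u : ℝ) := by
          refine Finset.sum_le_sum fun v _ => ?_
          refine div_le_div₀ (add_nonneg hβ0.le (by positivity)) ?_ hdu
            (degR_le_MdegR_left u v)
          have hcc : ((S2a β E C u v).card : ℝ) ≤ ((phi2p β E C u).card : ℝ) := by
            exact_mod_cast Finset.card_le_card (S2a_subset_phi2p u v)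
          gcongr
      _ = _ := by rw [Finset.sum_const, nsmul_eq_mul]

lemma Aw_le (hrefl : ∀ u, E u u) (hβ0 : 0 < β) (hβ1 : β ≤ 1) (u : V) :
    Aw β E C u ≤ 3 / 2 := by
  refine le_trans (Aw_le_poly hrefl hβ0 u) ?_
  have hd : (1:ℝ) ≤ (deg E u : ℝ) := by exact_mod_cast deg_pos hrefl u
  exact arith_cap hβ0 hβ1 (Nat.cast_nonneg _) (Nat.cast_nonneg _) hd (cast_card_le_deg u)

lemma Bw_le_poly (hsymm : ∀ u v, E u v → E v u) (hrefl : ∀ u, E u u) (hβ0 : 0 < β)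
    (U : Finset V) (z : V) :
    Bw β E C U z ≤ ((phi2p β E C z).card : ℝ) * (1 / (deg E z : ℝ))
      + ((Q3 β E C z).card : ℝ)
        * ((β + ((phi2p β E C z).card : ℝ) / (deg E z : ℝ)) / (deg E z : ℝ)) := by
  have hdz := degR_pos hrefl z
  set g : V → ℝ := fun u =>
    (if u ∈ phi2p β E C z then 1 / (deg E z : ℝ) else 0)
    + (if u ∈ Q3 β E C z then
        (β + ((phi2p β E C z).card : ℝ) / (deg E z : ℝ)) / (deg E z : ℝ) else 0) with hg
  have hterm : ∀ u ∈ U,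
      (if z ∈ phi2p β E C u then 1 / (Mdeg E u z : ℝ) else 0)
      + (if z ∈ Q3 β E C u then
          (β + ((S2b β E C u z).card : ℝ) / (deg E z : ℝ)) / (Mdeg E u z : ℝ) else 0)
      ≤ g u := by
    intro u _
    rw [hg]
    refine add_le_add ?_ ?_
    · by_cases h1 : z ∈ phi2p β E C u
      · rw [if_pos h1, if_pos ((phi2p_symm hsymm).1 h1)]
        exact one_div_le_one_div_of_le hdz (degR_le_MdegR_right u z)
      · rw [if_neg h1, if_neg (fun h => h1 ((phi2p_symm hsymm).2 h))]
    · by_cases h2 : z ∈ Q3 β E C u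
      · rw [if_pos h2, if_pos ((Q3_symm hsymm).1 h2)]
        refine div_le_div₀ (add_nonneg hβ0.le (by positivity)) ?_ hdz
          (degR_le_MdegR_right u z)
        have hC : C u = C z := (mem_Q3.1 h2).2.2
        have hcc : ((S2b β E C u z).card : ℝ) ≤ ((phi2p β E C z).card : ℝ) := by
          exact_mod_cast Finset.card_le_card (fun w hw => S2b_subset_phi2p_right hC hw)
        gcongr
      · rw [if_neg h2, if_neg (fun h => h2 ((Q3_symm hsymm).2 h))]
  have hgnn : ∀ u, 0 ≤ g u := by
    intro u
    rw [hg]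
    refine add_nonneg ?_ ?_
    · split
      · positivity
      · exact le_refl 0
    · split
      · exact div_nonneg (add_nonneg hβ0.le (by positivity)) (Nat.cast_nonneg _)
      · exact le_refl 0
  calc Bw β E C U z ≤ ∑ u ∈ U, g u := Finset.sum_le_sum hterm
    _ ≤ ∑ u ∈ (Finset.univ : Finset V), g u :=
        Finset.sum_le_sum_of_subset_of_nonneg (Finset.subset_univ U)
          (fun u _ _ => hgnn u)
    _ = (∑ u ∈ (Finset.univ : Finset V), if u ∈ phi2p β E C z then 1 / (deg E z : ℝ) else 0)
        + ∑ u ∈ (Finset.univ : Finset V), if u ∈ Q3 β E C z then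
            (β + ((phi2p β E C z).card : ℝ) / (deg E z : ℝ)) / (deg E z : ℝ) else 0 := by
        rw [hg, Finset.sum_add_distrib]
    _ = _ := by
        rw [Finset.sum_ite_mem, Finset.sum_ite_mem, Finset.univ_inter, Finset.univ_inter,
          Finset.sum_const, Finset.sum_const, nsmul_eq_mul, nsmul_eq_mul]

lemma Bw_le (hsymm : ∀ u v, E u v → E v u) (hrefl : ∀ u, E u u) (hβ0 : 0 < β)
    (hβ1 : β ≤ 1) (U : Finset V) (z : V) :
    Bw β E C U z ≤ 3 / 2 := by
  refine le_trans (Bw_le_poly hsymm hrefl hβ0 U z) ?_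
  have hd : (1:ℝ) ≤ (deg E z : ℝ) := by exact_mod_cast deg_pos hrefl z
  exact arith_cap hβ0 hβ1 (Nat.cast_nonneg _) (Nat.cast_nonneg _) hd (cast_card_le_deg z)

lemma Ww_le (hsymm : ∀ u v, E u v → E v u) (hrefl : ∀ u, E u u)
    (U : Finset V) (z : V) : Ww β E C U z ≤ 1 := by
  have hdz := degR_pos hrefl z
  have hinner : ∀ u ∈ U,
      (∑ v ∈ Q3 β E C u,
        ((if z ∈ S2a β E C u v then 1 / ((deg E z : ℝ) * (Mdeg E u v : ℝ)) else 0)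
          + (if z ∈ S2b β E C u v then 1 / ((deg E z : ℝ) * (Mdeg E u v : ℝ)) else 0)))
      ≤ (if u ∈ Nbr E z then 1 / (deg E z : ℝ) else 0) := by
    intro u _
    by_cases hu : u ∈ Nbr E z
    · rw [if_pos hu]
      have hdu := degR_pos hrefl u
      have hbound : ∀ v ∈ Q3 β E C u,
          ((if z ∈ S2a β E C u v then 1 / ((deg E z : ℝ) * (Mdeg E u v : ℝ)) else 0)
            + (if z ∈ S2b β E C u v then 1 / ((deg E z : ℝ) * (Mdeg E u v : ℝ)) else 0))
          ≤ 1 / ((deg E z : ℝ) * (deg E u : ℝ)) := by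
        intro v _
        have hmono : 1 / ((deg E z : ℝ) * (Mdeg E u v : ℝ))
            ≤ 1 / ((deg E z : ℝ) * (deg E u : ℝ)) := by
          refine one_div_le_one_div_of_le (by positivity) ?_
          exact mul_le_mul_of_nonneg_left (degR_le_MdegR_left u v) hdz.le
        by_cases h1 : z ∈ S2a β E C u v
        · rw [if_pos h1, if_neg (fun h2 => (mem_S2a.1 h1).2.2 (mem_S2b.1 h2).2.2),
            add_zero]
          exact hmono
        · rw [if_neg h1, zero_add]
          by_cases h2 : z ∈ S2b β E C u v
          · rw [if_pos h2]; exact hmono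
          · rw [if_neg h2]; positivity
      calc _ ≤ ∑ _v ∈ Q3 β E C u, 1 / ((deg E z : ℝ) * (deg E u : ℝ)) :=
            Finset.sum_le_sum hbound
        _ = ((Q3 β E C u).card : ℝ) * (1 / ((deg E z : ℝ) * (deg E u : ℝ))) := by
            rw [Finset.sum_const, nsmul_eq_mul]
        _ ≤ (deg E u : ℝ) * (1 / ((deg E z : ℝ) * (deg E u : ℝ))) := by
            have : ((Q3 β E C u).card : ℝ) ≤ (deg E u : ℝ) := by
              exact_mod_cast Finset.card_le_card (Q3_subset_Nbr (C := C))
            gcongr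
        _ = 1 / (deg E z : ℝ) := by
            field_simp
    · rw [if_neg hu]
      refine le_of_eq (Finset.sum_eq_zero ?_)
      intro v _
      have hza : z ∉ S2a β E C u v := by
        intro h
        exact hu (mem_Nbr.2 (hsymm _ _ (mem_S2a.1 h).1.1.1))
      have hzb : z ∉ S2b β E C u v := by
        intro h
        exact hu (mem_Nbr.2 (hsymm _ _ (mem_S2b.1 h).1.1.1))
      rw [if_neg hza, if_neg hzb, add_zero]
  calc Ww β E C U z ≤ ∑ u ∈ U, (if u ∈ Nbr E z then 1 / (deg E z : ℝ) else 0) :=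
        Finset.sum_le_sum hinner
    _ ≤ ∑ u ∈ (Finset.univ : Finset V), (if u ∈ Nbr E z then 1 / (deg E z : ℝ) else 0) := by
        refine Finset.sum_le_sum_of_subset_of_nonneg (Finset.subset_univ U) ?_
        intro u _ _
        split
        · positivity
        · exact le_refl 0
    _ = ((Nbr E z).card : ℝ) * (1 / (deg E z : ℝ)) := by
        rw [Finset.sum_ite_mem, Finset.univ_inter, Finset.sum_const, nsmul_eq_mul]
    _ = 1 := by
        have : ((Nbr E z).card : ℝ) = (deg E z : ℝ) := by rw [deg]
        rw [this]
        field_simp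

lemma rho_le_four (hsymm : ∀ u v, E u v → E v u) (hrefl : ∀ u, E u u) (hβ0 : 0 < β)
    (hβ1 : β ≤ 1) (U : Finset V) (z : V) : rho β E C U z ≤ 4 := by
  have h1 : (if z ∈ U then Aw β E C z else 0) ≤ 3 / 2 := by
    split
    · exact Aw_le hrefl hβ0 hβ1 z
    · norm_num
  have h2 := Bw_le (C := C) hsymm hrefl hβ0 hβ1 U z
  have h3 := Ww_le (β := β) (C := C) hsymm hrefl U z
  rw [rho]
  linarith

lemma swap_bound (hsymm : ∀ u v, E u v → E v u) (hrefl : ∀ u, E u u) {u : V}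
    (F : V → Finset V) (target : Finset V)
    (hsub : ∀ v ∈ Q3 β E C u, F v ⊆ target)
    (hnbr : ∀ v ∈ Q3 β E C u, ∀ w ∈ F v, v ∈ Nbr E w) :
    ∑ v ∈ Q3 β E C u, ∑ w ∈ F v, 1 / ((deg E w : ℝ) * (Mdeg E u v : ℝ))
      ≤ (1 / (deg E u : ℝ)) * (target.card : ℝ) := by
  have hdu := degR_pos hrefl u
  have step1 : ∑ v ∈ Q3 β E C u, ∑ w ∈ F v, 1 / ((deg E w : ℝ) * (Mdeg E u v : ℝ))
      ≤ ∑ v ∈ Q3 β E C u, ∑ w ∈ F v, (1 / (deg E u : ℝ)) * (1 / (deg E w : ℝ)) := by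
    refine Finset.sum_le_sum fun v _ => Finset.sum_le_sum fun w _ => ?_
    have hdw := degR_pos hrefl w
    have h1 : 1 / ((deg E w : ℝ) * (Mdeg E u v : ℝ))
        ≤ 1 / ((deg E w : ℝ) * (deg E u : ℝ)) := by
      refine one_div_le_one_div_of_le (by positivity) ?_
      exact mul_le_mul_of_nonneg_left (degR_le_MdegR_left u v) hdw.le
    have h2 : 1 / ((deg E w : ℝ) * (deg E u : ℝ))
        = (1 / (deg E u : ℝ)) * (1 / (deg E w : ℝ)) := by
      ring
    linarith
  have step2 : ∑ v ∈ Q3 β E C u, ∑ w ∈ F v, (1 / (deg E u : ℝ)) * (1 / (deg E w : ℝ))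
      = (1 / (deg E u : ℝ)) * ∑ v ∈ Q3 β E C u, ∑ w ∈ F v, (1 / (deg E w : ℝ)) := by
    rw [Finset.mul_sum]
    refine Finset.sum_congr rfl fun v _ => ?_
    rw [Finset.mul_sum]
  have step3 : ∑ v ∈ Q3 β E C u, ∑ w ∈ F v, (1 / (deg E w : ℝ)) ≤ (target.card : ℝ) := by
    have conv1 : ∀ v ∈ Q3 β E C u, ∑ w ∈ F v, (1 / (deg E w : ℝ))
        = ∑ w ∈ (Finset.univ : Finset V), (if w ∈ F v then 1 / (deg E w : ℝ) else 0) := by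
      intro v _
      rw [Finset.sum_ite_mem, Finset.univ_inter]
    rw [Finset.sum_congr rfl conv1, Finset.sum_comm]
    have perw : ∀ w : V, ∑ v ∈ Q3 β E C u, (if w ∈ F v then 1 / (deg E w : ℝ) else 0)
        ≤ (if w ∈ target then (1:ℝ) else 0) := by
      intro w
      by_cases hw : w ∈ target
      · rw [if_pos hw]
        have hdw := degR_pos hrefl w
        calc ∑ v ∈ Q3 β E C u, (if w ∈ F v then 1 / (deg E w : ℝ) else 0)
            ≤ ∑ v ∈ Q3 β E C u, (if v ∈ Nbr E w then 1 / (deg E w : ℝ) else 0) := by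
              refine Finset.sum_le_sum fun v hv => ?_
              by_cases h1 : w ∈ F v
              · rw [if_pos h1, if_pos (hnbr v hv w h1)]
              · rw [if_neg h1]
                split
                · positivity
                · exact le_refl 0
          _ = (((Q3 β E C u).filter (fun v => v ∈ Nbr E w)).card : ℝ)
              * (1 / (deg E w : ℝ)) := by
              rw [← Finset.sum_filter, Finset.sum_const, nsmul_eq_mul]
          _ ≤ ((deg E w : ℝ)) * (1 / (deg E w : ℝ)) := by
              have hle : (((Q3 β E C u).filter (fun v => v ∈ Nbr E w)).card : ℝ)
                  ≤ (deg E w : ℝ) := by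
                have : ((Q3 β E C u).filter (fun v => v ∈ Nbr E w)) ⊆ Nbr E w :=
                  fun x hx => (Finset.mem_filter.1 hx).2
                exact_mod_cast Finset.card_le_card this
              gcongr
          _ = 1 := by field_simp
      · rw [if_neg hw]
        refine le_of_eq (Finset.sum_eq_zero fun v hv => ?_)
        rw [if_neg (fun h1 => hw (hsub v hv h1))]
    calc ∑ w ∈ (Finset.univ : Finset V), ∑ v ∈ Q3 β E C u,
          (if w ∈ F v then 1 / (deg E w : ℝ) else 0)
        ≤ ∑ w ∈ (Finset.univ : Finset V), (if w ∈ target then (1:ℝ) else 0) :=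
          Finset.sum_le_sum fun w _ => perw w
      _ = (target.card : ℝ) := by
          rw [Finset.sum_ite_mem, Finset.univ_inter, Finset.sum_const, nsmul_eq_mul,
            mul_one]
  calc ∑ v ∈ Q3 β E C u, ∑ w ∈ F v, 1 / ((deg E w : ℝ) * (Mdeg E u v : ℝ))
      ≤ (1 / (deg E u : ℝ)) * ∑ v ∈ Q3 β E C u, ∑ w ∈ F v, (1 / (deg E w : ℝ)) := by
        rw [← step2]; exact step1
    _ ≤ (1 / (deg E u : ℝ)) * (target.card : ℝ) := by
        refine mul_le_mul_of_nonneg_left step3 (by positivity)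

lemma rho_sum_le (hsymm : ∀ u v, E u v → E v u) (hrefl : ∀ u, E u u) (hβ0 : 0 < β)
    (hβ1 : β ≤ 1) (U : Finset V) :
    ∑ z ∈ (Finset.univ : Finset V), rho β E C U z ≤ 4 * (U.card : ℝ) := by
  have hsplit : ∑ z ∈ (Finset.univ : Finset V), rho β E C U z
      = (∑ z ∈ (Finset.univ : Finset V), if z ∈ U then Aw β E C z else 0)
        + (∑ z ∈ (Finset.univ : Finset V), Bw β E C U z)
        + ∑ z ∈ (Finset.univ : Finset V), Ww β E C U z := by
    simp only [rho, Finset.sum_add_distrib]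
  have hA : (∑ z ∈ (Finset.univ : Finset V), if z ∈ U then Aw β E C z else 0)
      = ∑ u ∈ U, Aw β E C u := by
    rw [Finset.sum_ite_mem, Finset.univ_inter]
  have hB : ∑ z ∈ (Finset.univ : Finset V), Bw β E C U z
      = ∑ u ∈ U, ((∑ v ∈ phi2p β E C u, 1 / (Mdeg E u v : ℝ))
        + ∑ v ∈ Q3 β E C u,
            (β + ((S2b β E C u v).card : ℝ) / (deg E v : ℝ)) / (Mdeg E u v : ℝ)) := by
    simp only [Bw]
    rw [Finset.sum_comm]
    refine Finset.sum_congr rfl fun u _ => ?_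
    rw [Finset.sum_add_distrib, Finset.sum_ite_mem, Finset.univ_inter,
      Finset.sum_ite_mem, Finset.univ_inter]
  have hW : ∑ z ∈ (Finset.univ : Finset V), Ww β E C U z
      = ∑ u ∈ U, ∑ v ∈ Q3 β E C u,
          ((∑ w ∈ S2a β E C u v, 1 / ((deg E w : ℝ) * (Mdeg E u v : ℝ)))
            + ∑ w ∈ S2b β E C u v, 1 / ((deg E w : ℝ) * (Mdeg E u v : ℝ))) := by
    simp only [Ww]
    rw [Finset.sum_comm]
    refine Finset.sum_congr rfl fun u _ => ?_
    rw [Finset.sum_comm]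
    refine Finset.sum_congr rfl fun v _ => ?_
    rw [Finset.sum_add_distrib, Finset.sum_ite_mem, Finset.univ_inter,
      Finset.sum_ite_mem, Finset.univ_inter]
  rw [hsplit, hA, hB, hW, ← Finset.sum_add_distrib, ← Finset.sum_add_distrib]
  have hcard : (4 : ℝ) * (U.card : ℝ) = ∑ _u ∈ U, (4:ℝ) := by
    rw [Finset.sum_const, nsmul_eq_mul, mul_comm]
  rw [hcard]
  refine Finset.sum_le_sum fun u _ => ?_
  -- per-vertex bound
  have hdu := degR_pos hrefl u
  have hd1 : (1:ℝ) ≤ (deg E u : ℝ) := by exact_mod_cast deg_pos hrefl u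
  set p : ℝ := ((phi2p β E C u).card : ℝ) with hp
  set q : ℝ := ((Q3 β E C u).card : ℝ) with hq
  have hAu : Aw β E C u ≤ p * (1 / (deg E u : ℝ))
      + q * ((β + p / (deg E u : ℝ)) / (deg E u : ℝ)) := Aw_le_poly hrefl hβ0 u
  have hBu : (∑ v ∈ phi2p β E C u, 1 / (Mdeg E u v : ℝ))
      + (∑ v ∈ Q3 β E C u,
          (β + ((S2b β E C u v).card : ℝ) / (deg E v : ℝ)) / (Mdeg E u v : ℝ))
      ≤ p * (1 / (deg E u : ℝ)) + q * ((β + 1) / (deg E u : ℝ)) := by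
    refine add_le_add ?_ ?_
    · calc ∑ v ∈ phi2p β E C u, 1 / (Mdeg E u v : ℝ)
          ≤ ∑ _v ∈ phi2p β E C u, 1 / (deg E u : ℝ) := by
            refine Finset.sum_le_sum fun v _ => ?_
            exact one_div_le_one_div_of_le hdu (degR_le_MdegR_left u v)
        _ = _ := by rw [Finset.sum_const, nsmul_eq_mul]
    · calc ∑ v ∈ Q3 β E C u,
            (β + ((S2b β E C u v).card : ℝ) / (deg E v : ℝ)) / (Mdeg E u v : ℝ)
          ≤ ∑ _v ∈ Q3 β E C u, (β + 1) / (deg E u : ℝ) := by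
            refine Finset.sum_le_sum fun v _ => ?_
            have hdv := degR_pos hrefl v
            refine div_le_div₀ (by positivity) ?_ hdu (degR_le_MdegR_left u v)
            have hle : ((S2b β E C u v).card : ℝ) ≤ (deg E v : ℝ) := by
              exact_mod_cast Finset.card_le_card (S2b_subset_Nbr_right u v)
            have : ((S2b β E C u v).card : ℝ) / (deg E v : ℝ) ≤ 1 := by
              rw [div_le_one hdv]; exact hle
            linarith
        _ = _ := by rw [Finset.sum_const, nsmul_eq_mul]
  have hWu : ∑ v ∈ Q3 β E C u,
        ((∑ w ∈ S2a β E C u v, 1 / ((deg E w : ℝ) * (Mdeg E u v : ℝ)))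
          + ∑ w ∈ S2b β E C u v, 1 / ((deg E w : ℝ) * (Mdeg E u v : ℝ)))
      ≤ (1 / (deg E u : ℝ)) * (p + q) := by
    rw [Finset.sum_add_distrib, mul_add]
    refine add_le_add ?_ ?_
    · refine swap_bound hsymm hrefl (fun v => S2a β E C u v) (phi2p β E C u)
        (fun v _ => S2a_subset_phi2p u v) ?_
      intro v _ w hw
      exact mem_Nbr.2 (hsymm _ _ (mem_S2a.1 hw).1.1.2)
    · refine swap_bound hsymm hrefl (fun v => S2b β E C u v) (Q3 β E C u) ?_ ?_
      · intro v hv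
        exact S2b_subset_Q3 hsymm hrefl hβ0.le (mem_Q3.1 hv).2.1
      · intro v _ w hw
        exact mem_Nbr.2 (hsymm _ _ (mem_S2b.1 hw).1.1.2)
  have harith := arith_total (p := p) (q := q) (d := (deg E u : ℝ)) hβ0 hβ1
    (Nat.cast_nonneg _) (Nat.cast_nonneg _) hd1 (cast_card_le_deg u)
  linarith

end Caps

section Knapsack

variable [Fintype V]

lemma exists_topk (c : V → ℕ) :
    ∀ k, k ≤ Fintype.card V → ∃ T : Finset V, T.card = k ∧ ∀ z ∉ T, ∀ t ∈ T, c z ≤ c t := by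
  intro k
  induction k with
  | zero => exact fun _ => ⟨∅, rfl, by simp⟩
  | succ n ih =>
    intro hn
    obtain ⟨T, hTcard, hT⟩ := ih (Nat.le_of_succ_le hn)
    have hne : (Finset.univ \ T).Nonempty := by
      rw [Finset.sdiff_nonempty]
      intro hsub
      have h1 : Fintype.card V ≤ n := by
        have := Finset.card_le_card hsub
        rwa [Finset.card_univ, hTcard] at this
      omega
    obtain ⟨t, ht, htmax⟩ := Finset.exists_max_image (Finset.univ \ T) c hne
    have htT : t ∉ T := (Finset.mem_sdiff.1 ht).2
    refine ⟨insert t T, ?_, ?_⟩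
    · rw [Finset.card_insert_of_notMem htT, hTcard]
    · intro z hz s hs
      rcases Finset.mem_insert.1 hs with rfl | hs
      · refine htmax z (Finset.mem_sdiff.2 ⟨Finset.mem_univ _, ?_⟩)
        intro hzT
        exact hz (Finset.mem_insert_of_mem hzT)
      · refine hT z ?_ s hs
        intro hzT
        exact hz (Finset.mem_insert_of_mem hzT)

lemma knapsack (c : V → ℕ) (ω : V → ℝ) (k : ℕ) (hk1 : 1 ≤ k) (hk2 : k ≤ Fintype.card V)
    (h0 : ∀ z, 0 ≤ ω z) (h1 : ∀ z, ω z ≤ 1)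
    (hs : ∑ z ∈ (Finset.univ : Finset V), ω z ≤ (k : ℝ)) :
    ∑ z ∈ (Finset.univ : Finset V), ω z * (c z : ℝ)
      ≤ (((Finset.powersetCard k (Finset.univ : Finset V)).sup
          (fun T => ∑ u ∈ T, c u) : ℕ) : ℝ) := by
  obtain ⟨T, hTc, hTmax⟩ := exists_topk c k hk2
  have hTne : T.Nonempty := Finset.card_pos.1 (hTc ▸ hk1)
  obtain ⟨t₀, ht₀, ht₀min⟩ := Finset.exists_min_image T c hTne
  set m : ℝ := (c t₀ : ℝ) with hm
  have hm0 : (0:ℝ) ≤ m := Nat.cast_nonneg _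
  have hsplitsum : ∀ f : V → ℝ, ∑ z ∈ (Finset.univ : Finset V), f z
      = ∑ z ∈ Finset.univ \ T, f z + ∑ z ∈ T, f z :=
    fun f => (Finset.sum_sdiff (Finset.subset_univ T)).symm
  have hout : ∑ z ∈ Finset.univ \ T, ω z * (c z : ℝ)
      ≤ (∑ z ∈ Finset.univ \ T, ω z) * m := by
    rw [Finset.sum_mul]
    refine Finset.sum_le_sum fun z hz => ?_
    have hzc : (c z : ℝ) ≤ m := by
      rw [hm]
      exact_mod_cast hTmax z (Finset.mem_sdiff.1 hz).2 t₀ ht₀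
    exact mul_le_mul_of_nonneg_left hzc (h0 z)
  have houtw : ∑ z ∈ Finset.univ \ T, ω z ≤ (k : ℝ) - ∑ z ∈ T, ω z := by
    have := hsplitsum ω
    linarith [hs]
  have hTcost : ∀ z ∈ T, m ≤ (c z : ℝ) := by
    intro z hz
    rw [hm]
    exact_mod_cast ht₀min z hz
  have main : ∑ z ∈ (Finset.univ : Finset V), ω z * (c z : ℝ) ≤ ∑ z ∈ T, (c z : ℝ) := by
    rw [hsplitsum (fun z => ω z * (c z : ℝ))]
    have step : ∑ z ∈ Finset.univ \ T, ω z * (c z : ℝ)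
        ≤ ((k : ℝ) - ∑ z ∈ T, ω z) * m :=
      le_trans hout (mul_le_mul_of_nonneg_right houtw hm0)
    have hkm : (k : ℝ) * m = ∑ _z ∈ T, m := by
      rw [Finset.sum_const, hTc, nsmul_eq_mul]
    have step2 : ((k : ℝ) - ∑ z ∈ T, ω z) * m + ∑ z ∈ T, ω z * (c z : ℝ)
        = ∑ z ∈ T, (ω z * (c z : ℝ) - ω z * m + m) := by
      rw [Finset.sum_add_distrib, Finset.sum_sub_distrib, sub_mul, hkm, ← Finset.sum_mul]
      ring
    have step3 : ∑ z ∈ T, (ω z * (c z : ℝ) - ω z * m + m) ≤ ∑ z ∈ T, (c z : ℝ) := by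
      refine Finset.sum_le_sum fun z hz => ?_
      have h3 := hTcost z hz
      have h4 := h0 z
      have h5 := h1 z
      nlinarith
    linarith
  refine le_trans main ?_
  have hmem : T ∈ Finset.powersetCard k (Finset.univ : Finset V) := by
    rw [Finset.mem_powersetCard]
    exact ⟨Finset.subset_univ T, hTc⟩
  have hle := Finset.le_sup (f := fun T => ∑ u ∈ T, c u) hmem
  have : ∑ z ∈ T, (c z : ℝ) = ((∑ u ∈ T, c u : ℕ) : ℝ) := by
    push_cast
    rfl
  rw [this]
  exact_mod_cast hle

end Knapsack

section Global

variable [Fintype V] {β : ℝ} {E : V → V → Prop} {C : V → α}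

lemma R1_eq (U : Finset V) :
    ∑ z ∈ (Finset.univ : Finset V), (if z ∈ U then Aw β E C z else 0) * (costC E C z : ℝ)
      = ∑ u ∈ U, (costC E C u : ℝ) * Aw β E C u := by
  calc ∑ z ∈ (Finset.univ : Finset V), (if z ∈ U then Aw β E C z else 0) * (costC E C z : ℝ)
      = ∑ z ∈ (Finset.univ : Finset V),
          (if z ∈ U then Aw β E C z * (costC E C z : ℝ) else 0) := by
        refine Finset.sum_congr rfl fun z _ => ?_
        rw [ite_mul, zero_mul]
    _ = ∑ z ∈ Finset.univ ∩ U, Aw β E C z * (costC E C z : ℝ) := Finset.sum_ite_mem _ _ _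
    _ = ∑ u ∈ U, (costC E C u : ℝ) * Aw β E C u := by
        rw [Finset.univ_inter]
        exact Finset.sum_congr rfl fun z _ => mul_comm _ _

lemma R2_eq (U : Finset V) :
    ∑ z ∈ (Finset.univ : Finset V), Bw β E C U z * (costC E C z : ℝ)
      = ∑ u ∈ U, ((∑ v ∈ phi2p β E C u, (costC E C v : ℝ) * (1 / (Mdeg E u v : ℝ)))
          + ∑ v ∈ Q3 β E C u, (costC E C v : ℝ)
              * ((β + ((S2b β E C u v).card : ℝ) / (deg E v : ℝ)) / (Mdeg E u v : ℝ))) := by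
  calc ∑ z ∈ (Finset.univ : Finset V), Bw β E C U z * (costC E C z : ℝ)
      = ∑ z ∈ (Finset.univ : Finset V), ∑ u ∈ U,
          (((if z ∈ phi2p β E C u then 1 / (Mdeg E u z : ℝ) else 0) * (costC E C z : ℝ))
            + ((if z ∈ Q3 β E C u then
                (β + ((S2b β E C u z).card : ℝ) / (deg E z : ℝ)) / (Mdeg E u z : ℝ) else 0)
              * (costC E C z : ℝ))) := by
        refine Finset.sum_congr rfl fun z _ => ?_
        rw [Bw, Finset.sum_mul]
        exact Finset.sum_congr rfl fun u _ => add_mul _ _ _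
    _ = ∑ u ∈ U, ∑ z ∈ (Finset.univ : Finset V),
          (((if z ∈ phi2p β E C u then 1 / (Mdeg E u z : ℝ) else 0) * (costC E C z : ℝ))
            + ((if z ∈ Q3 β E C u then
                (β + ((S2b β E C u z).card : ℝ) / (deg E z : ℝ)) / (Mdeg E u z : ℝ) else 0)
              * (costC E C z : ℝ))) := Finset.sum_comm
    _ = ∑ u ∈ U, ((∑ v ∈ phi2p β E C u, (costC E C v : ℝ) * (1 / (Mdeg E u v : ℝ)))
          + ∑ v ∈ Q3 β E C u, (costC E C v : ℝ)
              * ((β + ((S2b β E C u v).card : ℝ) / (deg E v : ℝ)) / (Mdeg E u v : ℝ))) := by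
        refine Finset.sum_congr rfl fun u _ => ?_
        rw [Finset.sum_add_distrib]
        congr 1
        · calc ∑ z ∈ (Finset.univ : Finset V),
              ((if z ∈ phi2p β E C u then 1 / (Mdeg E u z : ℝ) else 0) * (costC E C z : ℝ))
              = ∑ z ∈ (Finset.univ : Finset V),
                (if z ∈ phi2p β E C u then 1 / (Mdeg E u z : ℝ) * (costC E C z : ℝ) else 0) := by
                refine Finset.sum_congr rfl fun z _ => ?_
                rw [ite_mul, zero_mul]
            _ = ∑ v ∈ Finset.univ ∩ phi2p β E C u,
                1 / (Mdeg E u v : ℝ) * (costC E C v : ℝ) := Finset.sum_ite_mem _ _ _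
            _ = _ := by
                rw [Finset.univ_inter]
                exact Finset.sum_congr rfl fun v _ => mul_comm _ _
        · calc ∑ z ∈ (Finset.univ : Finset V),
              ((if z ∈ Q3 β E C u then
                  (β + ((S2b β E C u z).card : ℝ) / (deg E z : ℝ)) / (Mdeg E u z : ℝ) else 0)
                * (costC E C z : ℝ))
              = ∑ z ∈ (Finset.univ : Finset V),
                (if z ∈ Q3 β E C u then
                  (β + ((S2b β E C u z).card : ℝ) / (deg E z : ℝ)) / (Mdeg E u z : ℝ)
                    * (costC E C z : ℝ) else 0) := by
                refine Finset.sum_congr rfl fun z _ => ?_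
                rw [ite_mul, zero_mul]
            _ = ∑ v ∈ Finset.univ ∩ Q3 β E C u,
                (β + ((S2b β E C u v).card : ℝ) / (deg E v : ℝ)) / (Mdeg E u v : ℝ)
                  * (costC E C v : ℝ) := Finset.sum_ite_mem _ _ _
            _ = _ := by
                rw [Finset.univ_inter]
                exact Finset.sum_congr rfl fun v _ => mul_comm _ _

lemma R3_eq (U : Finset V) :
    ∑ z ∈ (Finset.univ : Finset V), Ww β E C U z * (costC E C z : ℝ)
      = ∑ u ∈ U, ∑ v ∈ Q3 β E C u,
          ((∑ w ∈ S2a β E C u v, (costC E C w : ℝ) * (1 / ((deg E w : ℝ) * (Mdeg E u v : ℝ))))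
            + ∑ w ∈ S2b β E C u v, (costC E C w : ℝ)
                * (1 / ((deg E w : ℝ) * (Mdeg E u v : ℝ)))) := by
  calc ∑ z ∈ (Finset.univ : Finset V), Ww β E C U z * (costC E C z : ℝ)
      = ∑ z ∈ (Finset.univ : Finset V), ∑ u ∈ U, ∑ v ∈ Q3 β E C u,
          (((if z ∈ S2a β E C u v then 1 / ((deg E z : ℝ) * (Mdeg E u v : ℝ)) else 0)
              * (costC E C z : ℝ))
            + ((if z ∈ S2b β E C u v then 1 / ((deg E z : ℝ) * (Mdeg E u v : ℝ)) else 0)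
              * (costC E C z : ℝ))) := by
        refine Finset.sum_congr rfl fun z _ => ?_
        rw [Ww, Finset.sum_mul]
        refine Finset.sum_congr rfl fun u _ => ?_
        rw [Finset.sum_mul]
        exact Finset.sum_congr rfl fun v _ => add_mul _ _ _
    _ = ∑ u ∈ U, ∑ z ∈ (Finset.univ : Finset V), ∑ v ∈ Q3 β E C u,
          (((if z ∈ S2a β E C u v then 1 / ((deg E z : ℝ) * (Mdeg E u v : ℝ)) else 0)
              * (costC E C z : ℝ))
            + ((if z ∈ S2b β E C u v then 1 / ((deg E z : ℝ) * (Mdeg E u v : ℝ)) else 0)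
              * (costC E C z : ℝ))) := Finset.sum_comm
    _ = ∑ u ∈ U, ∑ v ∈ Q3 β E C u, ∑ z ∈ (Finset.univ : Finset V),
          (((if z ∈ S2a β E C u v then 1 / ((deg E z : ℝ) * (Mdeg E u v : ℝ)) else 0)
              * (costC E C z : ℝ))
            + ((if z ∈ S2b β E C u v then 1 / ((deg E z : ℝ) * (Mdeg E u v : ℝ)) else 0)
              * (costC E C z : ℝ))) := Finset.sum_congr rfl fun u _ => Finset.sum_comm
    _ = ∑ u ∈ U, ∑ v ∈ Q3 β E C u,
          ((∑ w ∈ S2a β E C u v, (costC E C w : ℝ) * (1 / ((deg E w : ℝ) * (Mdeg E u v : ℝ))))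
            + ∑ w ∈ S2b β E C u v, (costC E C w : ℝ)
                * (1 / ((deg E w : ℝ) * (Mdeg E u v : ℝ)))) := by
        refine Finset.sum_congr rfl fun u _ => Finset.sum_congr rfl fun v _ => ?_
        rw [Finset.sum_add_distrib]
        congr 1
        · calc ∑ z ∈ (Finset.univ : Finset V),
              ((if z ∈ S2a β E C u v then 1 / ((deg E z : ℝ) * (Mdeg E u v : ℝ)) else 0)
                * (costC E C z : ℝ))
              = ∑ z ∈ (Finset.univ : Finset V),
                (if z ∈ S2a β E C u v then
                  1 / ((deg E z : ℝ) * (Mdeg E u v : ℝ)) * (costC E C z : ℝ) else 0) := by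
                refine Finset.sum_congr rfl fun z _ => ?_
                rw [ite_mul, zero_mul]
            _ = ∑ w ∈ Finset.univ ∩ S2a β E C u v,
                1 / ((deg E w : ℝ) * (Mdeg E u v : ℝ)) * (costC E C w : ℝ) :=
                Finset.sum_ite_mem _ _ _
            _ = _ := by
                rw [Finset.univ_inter]
                exact Finset.sum_congr rfl fun w _ => mul_comm _ _
        · calc ∑ z ∈ (Finset.univ : Finset V),
              ((if z ∈ S2b β E C u v then 1 / ((deg E z : ℝ) * (Mdeg E u v : ℝ)) else 0)
                * (costC E C z : ℝ))
              = ∑ z ∈ (Finset.univ : Finset V),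
                (if z ∈ S2b β E C u v then
                  1 / ((deg E z : ℝ) * (Mdeg E u v : ℝ)) * (costC E C z : ℝ) else 0) := by
                refine Finset.sum_congr rfl fun z _ => ?_
                rw [ite_mul, zero_mul]
            _ = ∑ w ∈ Finset.univ ∩ S2b β E C u v,
                1 / ((deg E w : ℝ) * (Mdeg E u v : ℝ)) * (costC E C w : ℝ) :=
                Finset.sum_ite_mem _ _ _
            _ = _ := by
                rw [Finset.univ_inter]
                exact Finset.sum_congr rfl fun w _ => mul_comm _ _

lemma global_le (hsymm : ∀ u v, E u v → E v u) (hrefl : ∀ u, E u u) (hβ0 : 0 < β)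
    (U : Finset V) :
    β * ((∑ u ∈ U, ∑ v ∈ phi2p β E C u, xval β E u v)
      + ∑ u ∈ U, ∑ v ∈ phi3p β E C u, xval β E u v)
      ≤ ∑ z ∈ (Finset.univ : Finset V), rho β E C U z * (costC E C z : ℝ) := by
  have h30 : ∀ u : V, ∑ v ∈ phi3p β E C u, xval β E u v
      = ∑ v ∈ Q3 β E C u, xval β E u v := by
    intro u
    rw [Q3]
    exact (Finset.sum_erase _ (by rw [xval, if_pos rfl])).symm
  have hstep1 : β * ((∑ u ∈ U, ∑ v ∈ phi2p β E C u, xval β E u v)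
      + ∑ u ∈ U, ∑ v ∈ phi3p β E C u, xval β E u v)
      = ∑ u ∈ U, ((∑ v ∈ phi2p β E C u, β * xval β E u v)
        + ∑ v ∈ Q3 β E C u, β * xval β E u v) := by
    simp only [h30]
    rw [mul_add, Finset.mul_sum, Finset.mul_sum, ← Finset.sum_add_distrib]
    refine Finset.sum_congr rfl fun u _ => ?_
    rw [Finset.mul_sum, Finset.mul_sum]
  rw [hstep1]
  have hRHS : ∑ z ∈ (Finset.univ : Finset V), rho β E C U z * (costC E C z : ℝ)
      = (∑ u ∈ U, (costC E C u : ℝ) * Aw β E C u)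
        + (∑ u ∈ U, ((∑ v ∈ phi2p β E C u, (costC E C v : ℝ) * (1 / (Mdeg E u v : ℝ)))
            + ∑ v ∈ Q3 β E C u, (costC E C v : ℝ)
                * ((β + ((S2b β E C u v).card : ℝ) / (deg E v : ℝ)) / (Mdeg E u v : ℝ))))
        + ∑ u ∈ U, ∑ v ∈ Q3 β E C u,
            ((∑ w ∈ S2a β E C u v,
                (costC E C w : ℝ) * (1 / ((deg E w : ℝ) * (Mdeg E u v : ℝ))))
              + ∑ w ∈ S2b β E C u v,
                (costC E C w : ℝ) * (1 / ((deg E w : ℝ) * (Mdeg E u v : ℝ)))) := by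
    rw [← R1_eq U, ← R2_eq U, ← R3_eq U]
    simp only [rho, add_mul, Finset.sum_add_distrib]
  rw [hRHS, ← Finset.sum_add_distrib, ← Finset.sum_add_distrib]
  refine Finset.sum_le_sum fun u hu => ?_
  have hAwsplit : (costC E C u : ℝ) * Aw β E C u
      = (∑ v ∈ phi2p β E C u, (costC E C u : ℝ) * (1 / (Mdeg E u v : ℝ)))
        + ∑ v ∈ Q3 β E C u, (costC E C u : ℝ)
            * ((β + ((S2a β E C u v).card : ℝ) / (deg E u : ℝ)) / (Mdeg E u v : ℝ)) := by
    rw [Aw, mul_add, Finset.mul_sum, Finset.mul_sum]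
  rw [hAwsplit]
  have hp2 : ∑ v ∈ phi2p β E C u, β * xval β E u v
      ≤ ∑ v ∈ phi2p β E C u, ((costC E C u : ℝ) * (1 / (Mdeg E u v : ℝ))
          + (costC E C v : ℝ) * (1 / (Mdeg E u v : ℝ))) :=
    Finset.sum_le_sum fun v hv => pair2_bound hrefl hβ0 hv
  have hp3 : ∑ v ∈ Q3 β E C u, β * xval β E u v
      ≤ ∑ v ∈ Q3 β E C u,
          ((costC E C u : ℝ)
              * ((β + ((S2a β E C u v).card : ℝ) / (deg E u : ℝ)) / (Mdeg E u v : ℝ))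
            + (costC E C v : ℝ)
              * ((β + ((S2b β E C u v).card : ℝ) / (deg E v : ℝ)) / (Mdeg E u v : ℝ))
            + ((∑ w ∈ S2a β E C u v,
                (costC E C w : ℝ) * (1 / ((deg E w : ℝ) * (Mdeg E u v : ℝ))))
              + ∑ w ∈ S2b β E C u v,
                (costC E C w : ℝ) * (1 / ((deg E w : ℝ) * (Mdeg E u v : ℝ))))) :=
    Finset.sum_le_sum fun v hv => pair3_bound hsymm hrefl hβ0 hv
  have e2 : ∑ v ∈ phi2p β E C u, ((costC E C u : ℝ) * (1 / (Mdeg E u v : ℝ))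
        + (costC E C v : ℝ) * (1 / (Mdeg E u v : ℝ)))
      = (∑ v ∈ phi2p β E C u, (costC E C u : ℝ) * (1 / (Mdeg E u v : ℝ)))
        + ∑ v ∈ phi2p β E C u, (costC E C v : ℝ) * (1 / (Mdeg E u v : ℝ)) :=
    Finset.sum_add_distrib
  have e3 : ∑ v ∈ Q3 β E C u,
        ((costC E C u : ℝ)
            * ((β + ((S2a β E C u v).card : ℝ) / (deg E u : ℝ)) / (Mdeg E u v : ℝ))
          + (costC E C v : ℝ)
            * ((β + ((S2b β E C u v).card : ℝ) / (deg E v : ℝ)) / (Mdeg E u v : ℝ))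
          + ((∑ w ∈ S2a β E C u v,
              (costC E C w : ℝ) * (1 / ((deg E w : ℝ) * (Mdeg E u v : ℝ))))
            + ∑ w ∈ S2b β E C u v,
              (costC E C w : ℝ) * (1 / ((deg E w : ℝ) * (Mdeg E u v : ℝ)))))
      = (∑ v ∈ Q3 β E C u, (costC E C u : ℝ)
            * ((β + ((S2a β E C u v).card : ℝ) / (deg E u : ℝ)) / (Mdeg E u v : ℝ)))
        + (∑ v ∈ Q3 β E C u, (costC E C v : ℝ)
            * ((β + ((S2b β E C u v).card : ℝ) / (deg E v : ℝ)) / (Mdeg E u v : ℝ)))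
        + ∑ v ∈ Q3 β E C u,
            ((∑ w ∈ S2a β E C u v,
                (costC E C w : ℝ) * (1 / ((deg E w : ℝ) * (Mdeg E u v : ℝ))))
              + ∑ w ∈ S2b β E C u v,
                (costC E C w : ℝ) * (1 / ((deg E w : ℝ) * (Mdeg E u v : ℝ)))) := by
    rw [Finset.sum_add_distrib, Finset.sum_add_distrib]
  have := add_le_add hp2 hp3
  rw [e2, e3] at this
  linarith
end Global

end Stmt7

/-- `f^+_2 + f^+_3 ≤ (4/β)·cost^k_𝒞`. -/
theorem f2p_add_f3p_le_costTopK [Fintype V] (E : V → V → Prop)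
    (hsymm : ∀ u v, E u v → E v u) (hrefl : ∀ u, E u u)
    (β : ℝ) (hβ0 : 0 < β) (hβ1 : β < 1)
    {α : Type*} (C : V → α)
    (k : ℕ) (hk1 : 1 ≤ k) (hk2 : k ≤ Fintype.card V)
    (U : Finset V) (hU : U.card = k) :
    (∑ u ∈ U, ∑ v ∈ phi2p β E C u, xval β E u v)
      + (∑ u ∈ U, ∑ v ∈ phi3p β E C u, xval β E u v)
      ≤ (4 / β) * (costTopK E C k : ℝ) := by
  have hcost := Stmt7.global_le (C := C) hsymm hrefl hβ0 U
  have hsum := Stmt7.rho_sum_le (C := C) hsymm hrefl hβ0 hβ1.le U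
  rw [hU] at hsum
  have hk : ∑ z ∈ (Finset.univ : Finset V), (Stmt7.rho β E C U z / 4) ≤ (k : ℝ) := by
    rw [← Finset.sum_div]
    linarith
  have hknap := Stmt7.knapsack (costC E C) (fun z => Stmt7.rho β E C U z / 4) k hk1 hk2
    (fun z => div_nonneg (Stmt7.rho_nonneg hrefl hβ0 U z) (by norm_num))
    (fun z => by
      have := Stmt7.rho_le_four (C := C) hsymm hrefl hβ0 hβ1.le U z
      linarith)
    hk
  have hsum4 : ∑ z ∈ (Finset.univ : Finset V),
      (Stmt7.rho β E C U z / 4) * (costC E C z : ℝ)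
      = (∑ z ∈ (Finset.univ : Finset V),
          Stmt7.rho β E C U z * (costC E C z : ℝ)) / 4 := by
    rw [Finset.sum_div]
    exact Finset.sum_congr rfl fun z _ => by ring
  have h4 : ∑ z ∈ (Finset.univ : Finset V), Stmt7.rho β E C U z * (costC E C z : ℝ)
      ≤ 4 * (costTopK E C k : ℝ) := by
    have hknap' : (∑ z ∈ (Finset.univ : Finset V),
        Stmt7.rho β E C U z * (costC E C z : ℝ)) / 4 ≤ (costTopK E C k : ℝ) := by
      rw [← hsum4]
      exact hknap
    linarith
  rw [div_mul_eq_mul_div, le_div_iff₀ hβ0, mul_comm]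
  linarith

end
end

section
/- Let G=(V,E) be a correlation clustering instance, β∈(0,1), 𝒞 any clustering, k∈[n], and U⊆V with |U|=k. Let f^-_2 = Σ_{u∈U} Σ_{uv∈φ^-_2(u)} (1−x_{uv}). Then there exists a vector c^-_2∈ℝ_{≥0}^{V} such that: (a) f^-_2 ≤ Σ_{r∈V} c^-_2(r)·cost_𝒞(r); (b) c^-_2(r) ≤ 2/(1−β) for every r∈V; (c) Σ_{r∈V} c^-_2(r) ≤ 2k/(1−β). -/
open Finset

attribute [local instance] Classical.propDecidable

noncomputable section

variable {V : Type*}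

/-!
For `u ∈ U` and a cut `−`edge `uv`, the quantity `1 - x_{uv}` spreads `1 / M_{uv}` over the
common pruned neighbours `w` of `u` and `v`. Such a `w` sees a cut `+`edge: `uw` if `w` is
separated from `u`, and otherwise `wv`. In the first case the charge goes to `cost(u)`, and since
pruned neighbours have degrees within a factor `1 - β`, all `v ∈ N_H(w)` together put at most
`1 / (1 - β)` on each such `w`. In the second case `1 / M_{uv} ≤ 1 / d(u)` is charged to `cost(w)`.
Hence `c(r) = [r ∈ U] / (1 - β) + ∑_{u ∈ U, r ∈ N_H(u)} 1 / d(u)` works, and the bounds on `c`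
follow again from the degree comparison along pruned edges.
-/

section

variable [Fintype V] {E : V → V → Prop} {β : ℝ}

lemma mem_Nbr {u v : V} : v ∈ Nbr E u ↔ E u v := by simp [Nbr]

lemma mem_NH {u v : V} : v ∈ NH β E u ↔ EH β E u v := by simp [NH]

lemma card_NH_le_deg (u : V) : #(NH β E u) ≤ deg E u :=
  card_le_card fun _ hv => mem_Nbr.2 (mem_NH.1 hv).1

lemma card_phi1p_le_costC {α : Type*} (C : V → α) (u : V) : #(phi1p E C u) ≤ costC E C u :=
  card_le_card fun v hv => by
    simp only [phi1p, mem_filter, mem_univ, true_and] at hv ⊢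
    exact Or.inl hv

lemma EH.symm (hsymm : ∀ u v, E u v → E v u) {u v : V} (h : EH β E u v) : EH β E v u :=
  ⟨hsymm u v h.1, by simpa only [Mdeg, symmDiff_comm, max_comm] using h.2⟩

lemma mem_NH_comm (hsymm : ∀ u v, E u v → E v u) {u v : V} :
    v ∈ NH β E u ↔ u ∈ NH β E v :=
  ⟨fun h => mem_NH.2 ((mem_NH.1 h).symm hsymm), fun h => mem_NH.2 ((mem_NH.1 h).symm hsymm)⟩

lemma EH.deg_pos {u v : V} (h : EH β E u v) : 0 < deg E u :=
  card_pos.2 ⟨v, mem_Nbr.2 h.1⟩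

lemma EH.one_sub_mul_deg_le (hβ0 : 0 ≤ β) {u v : V} (h : EH β E u v) :
    (1 - β) * deg E u ≤ deg E v := by
  have hsdiff : (#(Nbr E u \ Nbr E v) : ℝ) ≤ β * max (deg E u : ℝ) (deg E v) := by
    refine le_trans ?_ (by exact_mod_cast h.2)
    exact_mod_cast card_le_card (symmDiff_def (Nbr E u) (Nbr E v) ▸ le_sup_left)
  have hcard : (deg E u : ℝ) ≤ #(Nbr E u \ Nbr E v) + deg E v := by
    exact_mod_cast card_le_card_sdiff_add_card
  rcases le_total (deg E u : ℝ) (deg E v) with hle | hle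
  · nlinarith
  · rw [max_eq_left hle] at hsdiff
    linarith

lemma inv_Mdeg_le_inv_deg_left {u : V} (hu : 0 < deg E u) (v : V) :
    (Mdeg E u v : ℝ)⁻¹ ≤ (deg E u : ℝ)⁻¹ :=
  inv_anti₀ (by exact_mod_cast hu) (by exact_mod_cast le_max_left _ _)

lemma inv_Mdeg_le_inv_deg_right (u : V) {v : V} (hv : 0 < deg E v) :
    (Mdeg E u v : ℝ)⁻¹ ≤ (deg E v : ℝ)⁻¹ :=
  inv_anti₀ (by exact_mod_cast hv) (by exact_mod_cast le_max_right _ _)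

lemma card_NH_mul_inv_deg_le_one (u : V) : (#(NH β E u) : ℝ) * (deg E u : ℝ)⁻¹ ≤ 1 :=
  div_le_one_of_le₀ (by exact_mod_cast card_NH_le_deg u) (Nat.cast_nonneg _)

lemma sum_inv_deg_NH_le (hβ0 : 0 ≤ β) (hβ1 : β < 1) (r : V) :
    ∑ u ∈ NH β E r, (deg E u : ℝ)⁻¹ ≤ (1 - β)⁻¹ := by
  have hterm : ∀ u ∈ NH β E r, (deg E u : ℝ)⁻¹ ≤ ((1 - β) * deg E r)⁻¹ := fun u hu =>
    have hEH := mem_NH.1 hu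
    inv_anti₀ (mul_pos (sub_pos.2 hβ1) (by exact_mod_cast hEH.deg_pos))
      (hEH.one_sub_mul_deg_le hβ0)
  calc ∑ u ∈ NH β E r, (deg E u : ℝ)⁻¹
      ≤ #(NH β E r) • ((1 - β) * deg E r)⁻¹ := sum_le_card_nsmul _ _ _ hterm
    _ = (#(NH β E r) : ℝ) * (deg E r : ℝ)⁻¹ * (1 - β)⁻¹ := by
        rw [nsmul_eq_mul, mul_inv, mul_comm (1 - β)⁻¹, mul_assoc]
    _ ≤ 1 * (1 - β)⁻¹ :=
        mul_le_mul_of_nonneg_right (card_NH_mul_inv_deg_le_one r)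
          (inv_nonneg.2 (sub_pos.2 hβ1).le)
    _ = (1 - β)⁻¹ := one_mul _

lemma one_sub_xval_of_ne {u v : V} (h : u ≠ v) :
    1 - xval β E u v = (#(NH β E u ∩ NH β E v) : ℝ) / Mdeg E u v := by
  simp only [xval, if_neg h, sub_sub_cancel]

section Charging

variable {α : Type*} (C : V → α)

lemma sum_inv_Mdeg_le_of_mem_NH (hsymm : ∀ u v, E u v → E v u) (hβ0 : 0 ≤ β) (hβ1 : β < 1)
    {u w : V} (hw : w ∈ NH β E u) :
    ∑ v ∈ phi2m E C u with w ∈ NH β E v, (Mdeg E u v : ℝ)⁻¹ ≤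
      if C w = C u then (deg E u : ℝ)⁻¹ * costC E C w else (1 - β)⁻¹ := by
  set S := {v ∈ phi2m E C u | w ∈ NH β E v}
  have hS : ∀ v ∈ S, v ∈ NH β E w ∧ C u ≠ C v := fun v hv => by
    simp only [S, phi2m, mem_filter, mem_univ, true_and] at hv
    exact ⟨(mem_NH_comm hsymm).1 hv.2, hv.1.2.2⟩
  split_ifs with hC
  · have hScut : S ⊆ phi1p E C w := fun v hv => by
      simp only [phi1p, mem_filter, mem_univ, true_and]
      exact ⟨(mem_NH.1 (hS v hv).1).1, hC ▸ (hS v hv).2⟩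
    calc ∑ v ∈ S, (Mdeg E u v : ℝ)⁻¹
        ≤ #S • (deg E u : ℝ)⁻¹ :=
          sum_le_card_nsmul _ _ _ fun v _ => inv_Mdeg_le_inv_deg_left (mem_NH.1 hw).deg_pos v
      _ ≤ (deg E u : ℝ)⁻¹ * costC E C w := by
          rw [nsmul_eq_mul, mul_comm]
          gcongr
          exact_mod_cast (card_le_card hScut).trans (card_phi1p_le_costC C w)
  · calc ∑ v ∈ S, (Mdeg E u v : ℝ)⁻¹
        ≤ ∑ v ∈ S, (deg E v : ℝ)⁻¹ := sum_le_sum fun v hv =>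
          inv_Mdeg_le_inv_deg_right u (mem_NH.1 ((mem_NH_comm hsymm).1 (hS v hv).1)).deg_pos
      _ ≤ ∑ v ∈ NH β E w, (deg E v : ℝ)⁻¹ :=
          sum_le_sum_of_subset_of_nonneg (fun v hv => (hS v hv).1) fun _ _ _ => by positivity
      _ ≤ (1 - β)⁻¹ := sum_inv_deg_NH_le hβ0 hβ1 w

lemma sum_phi2m_one_sub_xval_le (hsymm : ∀ u v, E u v → E v u) (hβ0 : 0 ≤ β) (hβ1 : β < 1)
    (u : V) :
    ∑ v ∈ phi2m E C u, (1 - xval β E u v) ≤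
      (1 - β)⁻¹ * costC E C u + ∑ w ∈ NH β E u, (deg E u : ℝ)⁻¹ * costC E C w := by
  have hsep : #{w ∈ NH β E u | ¬C w = C u} ≤ costC E C u := by
    refine (card_le_card fun w hw => ?_).trans (card_phi1p_le_costC C u)
    simp only [NH, phi1p, mem_filter, mem_univ, true_and] at hw ⊢
    exact ⟨hw.1.1, Ne.symm hw.2⟩
  calc ∑ v ∈ phi2m E C u, (1 - xval β E u v)
      = ∑ v ∈ phi2m E C u, ∑ w ∈ NH β E u ∩ NH β E v, (Mdeg E u v : ℝ)⁻¹ := by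
        refine sum_congr rfl fun v hv => ?_
        have huv : u ≠ v := by
          simp only [phi2m, mem_filter, mem_univ, true_and] at hv
          exact hv.1.symm
        rw [one_sub_xval_of_ne huv, sum_const, nsmul_eq_mul, div_eq_mul_inv]
    _ = ∑ w ∈ NH β E u, ∑ v ∈ phi2m E C u with w ∈ NH β E v, (Mdeg E u v : ℝ)⁻¹ :=
        sum_comm' fun v w => by simp only [mem_inter, mem_filter]; tauto
    _ ≤ ∑ w ∈ NH β E u, if C w = C u then (deg E u : ℝ)⁻¹ * costC E C w else (1 - β)⁻¹ :=
        sum_le_sum fun w hw => sum_inv_Mdeg_le_of_mem_NH C hsymm hβ0 hβ1 hw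
    _ = ∑ w ∈ NH β E u with C w = C u, (deg E u : ℝ)⁻¹ * costC E C w
          + #{w ∈ NH β E u | ¬C w = C u} * (1 - β)⁻¹ := by
        rw [sum_ite, sum_const, nsmul_eq_mul]
    _ ≤ ∑ w ∈ NH β E u, (deg E u : ℝ)⁻¹ * costC E C w + costC E C u * (1 - β)⁻¹ := by
        gcongr
        exact filter_subset _ _
    _ = _ := by ring

end Charging

/-- The coefficient vector `c^-_2`. -/
def coeffF2m (β : ℝ) (E : V → V → Prop) (U : Finset V) (r : V) : ℝ :=
  (if r ∈ U then (1 - β)⁻¹ else 0) + ∑ u ∈ U with r ∈ NH β E u, (deg E u : ℝ)⁻¹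

lemma coeffF2m_nonneg (hβ1 : β < 1) (U : Finset V) (r : V) : 0 ≤ coeffF2m β E U r := by
  have := inv_nonneg.2 (sub_pos.2 hβ1).le
  unfold coeffF2m
  split_ifs <;> positivity

lemma coeffF2m_le (hsymm : ∀ u v, E u v → E v u) (hβ0 : 0 ≤ β) (hβ1 : β < 1)
    (U : Finset V) (r : V) : coeffF2m β E U r ≤ 2 / (1 - β) := by
  have hown : (if r ∈ U then (1 - β)⁻¹ else 0) ≤ (1 - β)⁻¹ := by
    split_ifs
    exacts [le_rfl, inv_nonneg.2 (sub_pos.2 hβ1).le]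
  have hnbr : ∑ u ∈ U with r ∈ NH β E u, (deg E u : ℝ)⁻¹ ≤ (1 - β)⁻¹ :=
    (sum_le_sum_of_subset_of_nonneg
      (fun u hu => (mem_NH_comm hsymm).1 (mem_filter.1 hu).2) fun _ _ _ => by positivity).trans
      (sum_inv_deg_NH_le hβ0 hβ1 r)
  rw [coeffF2m, div_eq_mul_inv]
  linarith

lemma sum_coeffF2m_le (hβ0 : 0 ≤ β) (hβ1 : β < 1) (U : Finset V) :
    ∑ r, coeffF2m β E U r ≤ 2 * #U / (1 - β) := by
  have hone : 1 ≤ (1 - β)⁻¹ := (one_le_inv₀ (sub_pos.2 hβ1)).2 (by linarith)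
  have hnbr : ∑ r, ∑ u ∈ U with r ∈ NH β E u, (deg E u : ℝ)⁻¹ ≤ #U :=
    calc ∑ r, ∑ u ∈ U with r ∈ NH β E u, (deg E u : ℝ)⁻¹
        = ∑ u ∈ U, ∑ r ∈ NH β E u, (deg E u : ℝ)⁻¹ :=
          sum_comm' fun r u => by simp only [mem_filter, mem_univ]; tauto
      _ ≤ ∑ u ∈ U, (1 : ℝ) := sum_le_sum fun u _ => by
          rw [sum_const, nsmul_eq_mul]; exact card_NH_mul_inv_deg_le_one u
      _ = #U := by rw [sum_const, nsmul_one]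
  have hown : ∑ r : V, (if r ∈ U then (1 - β)⁻¹ else 0) = #U * (1 - β)⁻¹ := by
    rw [sum_ite_mem, univ_inter, sum_const, nsmul_eq_mul]
  simp only [coeffF2m, sum_add_distrib, hown]
  rw [mul_div_assoc, div_eq_mul_inv]
  nlinarith [(Nat.cast_nonneg #U : (0 : ℝ) ≤ #U)]

lemma sum_coeffF2m_mul_costC {α : Type*} (C : V → α) (U : Finset V) :
    ∑ r, coeffF2m β E U r * costC E C r =
      ∑ u ∈ U, ((1 - β)⁻¹ * costC E C u + ∑ w ∈ NH β E u, (deg E u : ℝ)⁻¹ * costC E C w) := by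
  have hnbr : ∑ r, (∑ u ∈ U with r ∈ NH β E u, (deg E u : ℝ)⁻¹) * costC E C r =
      ∑ u ∈ U, ∑ w ∈ NH β E u, (deg E u : ℝ)⁻¹ * costC E C w := by
    simp only [sum_mul]
    exact sum_comm' fun r u => by simp only [mem_filter, mem_univ]; tauto
  simp only [coeffF2m, add_mul, sum_add_distrib, ite_mul, zero_mul, sum_ite_mem, univ_inter, hnbr]

end

theorem exists_coeff_f2m_general [Fintype V] (E : V → V → Prop)
    (hsymm : ∀ u v, E u v → E v u)
    (β : ℝ) (hβ0 : 0 < β) (hβ1 : β < 1)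
    {α : Type*} (C : V → α)
    (k : ℕ)
    (U : Finset V) (hU : U.card = k) :
    ∃ c : V → ℝ, (∀ r, 0 ≤ c r) ∧
      (∑ u ∈ U, ∑ v ∈ phi2m E C u, (1 - xval β E u v)
        ≤ ∑ r : V, c r * (costC E C r : ℝ)) ∧
      (∀ r : V, c r ≤ 2 / (1 - β)) ∧
      (∑ r : V, c r ≤ 2 * (k : ℝ) / (1 - β)) := by
  refine ⟨coeffF2m β E U, coeffF2m_nonneg hβ1 U, ?_, coeffF2m_le hsymm hβ0.le hβ1 U,
    hU ▸ sum_coeffF2m_le hβ0.le hβ1 U⟩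
  rw [sum_coeffF2m_mul_costC]
  exact sum_le_sum fun u _ => sum_phi2m_one_sub_xval_le C hsymm hβ0.le hβ1 u

/-- There is a nonnegative coefficient vector `c^-_2` such that
(a) `f^-_2 ≤ Σ_r c^-_2(r)·cost_𝒞(r)`, (b) `c^-_2(r) ≤ 2/(1−β)` for every `r`, and
(c) `Σ_r c^-_2(r) ≤ 2k/(1−β)`. -/
theorem exists_coeff_f2m [Fintype V] (E : V → V → Prop)
    (hsymm : ∀ u v, E u v → E v u) (hrefl : ∀ u, E u u)
    (β : ℝ) (hβ0 : 0 < β) (hβ1 : β < 1)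
    {α : Type*} (C : V → α)
    (k : ℕ) (hk1 : 1 ≤ k) (hk2 : k ≤ Fintype.card V)
    (U : Finset V) (hU : U.card = k) :
    ∃ c : V → ℝ, (∀ r, 0 ≤ c r) ∧
      (∑ u ∈ U, ∑ v ∈ phi2m E C u, (1 - xval β E u v)
        ≤ ∑ r : V, c r * (costC E C r : ℝ)) ∧
      (∀ r : V, c r ≤ 2 / (1 - β)) ∧
      (∑ r : V, c r ≤ 2 * (k : ℝ) / (1 - β)) :=
  exists_coeff_f2m_general E hsymm β hβ0 hβ1 C k U hU

end
end
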